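/- arXiv:1309.1545 — 4 statements merged into one kernel-verified Lean document; each statement's English description precedes it below -/
import Mathlib

section
/- Let T be a finite tree with diameter at least 3, and let h ≥ p ≥ 1 be integers. Then λ_{h,p,p}(T) ≥ max{(Δ₂(T) − 1)·p, h + (Δ(T) − 1)·p}. -/
open SimpleGraph

/-- An `L(h,p,p)`-labelling of `G` with span `ℓ`: labels in `{0,…,ℓ}`, labels of vertices at
distance 1 differ by at least `h`, labels of vertices at distance 2 or 3 differ by at least `p`. -/
def IsLLabelling {V : Type} (G : SimpleGraph V) (h p ℓ : ℕ) (f : V → ℕ) : Prop :=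
  (∀ v, f v ≤ ℓ) ∧
  (∀ u v, G.dist u v = 1 → (h : ℤ) ≤ |(f u : ℤ) - (f v : ℤ)|) ∧
  (∀ u v, G.dist u v = 2 ∨ G.dist u v = 3 → (p : ℤ) ≤ |(f u : ℤ) - (f v : ℤ)|)

/-- `λ_{h,p,p}(G)`: the minimum span of an `L(h,p,p)`-labelling of `G`. -/
noncomputable def lambdaNum {V : Type} (G : SimpleGraph V) (h p : ℕ) : ℕ :=
  sInf {ℓ : ℕ | ∃ f : V → ℕ, IsLLabelling G h p ℓ f}

/-- A circular interval modulo `n`: a set of residues of the form `{a, a+1, …, a+s}` mod `n`. -/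
def IsCircInterval (n : ℕ) (I : Set (ZMod n)) : Prop :=
  ∃ (a : ZMod n) (s : ℕ), I = {x : ZMod n | ∃ i : ℕ, i ≤ s ∧ x = a + (i : ZMod n)}

/-- An elegant `L(h,p,p)`-labelling: additionally each vertex `u` has a circular interval `I u`
modulo `ℓ+1` containing the labels of all neighbours of `u`, with `I u ∩ I v = ∅` for edges `uv`. -/
def IsElegantLLabelling {V : Type} (G : SimpleGraph V) (h p ℓ : ℕ) (f : V → ℕ) : Prop :=
  IsLLabelling G h p ℓ f ∧
  ∃ I : V → Set (ZMod (ℓ + 1)),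
    (∀ u, IsCircInterval (ℓ + 1) (I u)) ∧
    (∀ u w, G.Adj u w → ((f w : ZMod (ℓ + 1)) ∈ I u)) ∧
    (∀ u v, G.Adj u v → I u ∩ I v = ∅)

/-- `λ*_{h,p,p}(G)`: the minimum span of an elegant `L(h,p,p)`-labelling of `G`. -/
noncomputable def lambdaStar {V : Type} (G : SimpleGraph V) (h p : ℕ) : ℕ :=
  sInf {ℓ : ℕ | ∃ f : V → ℕ, IsElegantLLabelling G h p ℓ f}

/-- The `ℓ`-cyclic distance between labels `a` and `b`. -/
def cycDist (ℓ a b : ℕ) : ℤ :=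
  min |(a : ℤ) - (b : ℤ)| ((ℓ : ℤ) - |(a : ℤ) - (b : ℤ)|)

/-- A `C(h,p,p)`-labelling of `G` with span `ℓ`: labels in `{0,…,ℓ-1}`, and the `ℓ`-cyclic distance
between labels of vertices at distance 1 (resp. 2 or 3) is at least `h` (resp. `p`). -/
def IsCLabelling {V : Type} (G : SimpleGraph V) (h p ℓ : ℕ) (f : V → ℕ) : Prop :=
  (∀ v, f v < ℓ) ∧
  (∀ u v, G.dist u v = 1 → (h : ℤ) ≤ cycDist ℓ (f u) (f v)) ∧
  (∀ u v, G.dist u v = 2 ∨ G.dist u v = 3 → (p : ℤ) ≤ cycDist ℓ (f u) (f v))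

/-- `σ_{h,p,p}(G)`: the minimum positive `ℓ` such that `G` has a `C(h,p,p)`-labelling of span `ℓ`. -/
noncomputable def sigmaNum {V : Type} (G : SimpleGraph V) (h p : ℕ) : ℕ :=
  sInf {ℓ : ℕ | 0 < ℓ ∧ ∃ f : V → ℕ, IsCLabelling G h p ℓ f}

/-- An elegant `C(h,p,p)`-labelling: additionally each vertex `u` has a circular interval `I u`
modulo `ℓ` containing the labels of all neighbours of `u`, with `I u ∩ I v = ∅` for edges `uv`. -/
def IsElegantCLabelling {V : Type} (G : SimpleGraph V) (h p ℓ : ℕ) (f : V → ℕ) : Prop :=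
  IsCLabelling G h p ℓ f ∧
  ∃ I : V → Set (ZMod ℓ),
    (∀ u, IsCircInterval ℓ (I u)) ∧
    (∀ u w, G.Adj u w → ((f w : ZMod ℓ) ∈ I u)) ∧
    (∀ u v, G.Adj u v → I u ∩ I v = ∅)

/-- `σ*_{h,p,p}(G)`: the minimum positive `ℓ` such that `G` has an elegant `C(h,p,p)`-labelling
of span `ℓ`. -/
noncomputable def sigmaStar {V : Type} (G : SimpleGraph V) (h p : ℕ) : ℕ :=
  sInf {ℓ : ℕ | 0 < ℓ ∧ ∃ f : V → ℕ, IsElegantCLabelling G h p ℓ f}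

/-- `Δ₂(G) = max over edges uv of (deg u + deg v)`. -/
noncomputable def deltaTwo {V : Type} (G : SimpleGraph V) [Fintype V] [DecidableRel G.Adj] : ℕ :=
  sSup {d : ℕ | ∃ u v : V, G.Adj u v ∧ d = G.degree u + G.degree v}

/-!
If `uv` is an edge of a tree, any two distinct vertices of `N(u) ∪ N(v)` are at distance at most
3, so an `L(h,p,p)`-labelling gives them pairwise `p`-separated labels in `[0, ℓ]`; as a tree has
no triangles, there are `deg u + deg v` of them, whence `(Δ₂ - 1) p ≤ ℓ`. For a vertex `u` of
maximum degree the labels of `N(u)` are moreover `h` away from the label `t` of `u`: those below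
`t` lie in `[0, t - h]`, those above in `[t + h, ℓ]`, and the gap of length `2h` around `t`
replaces one gap `p`, whence `h + (Δ - 1) p ≤ ℓ`.
-/

open Finset

section Separated

variable {ι : Type*} {S : Finset ι} {g : ι → ℕ} {p : ℕ}

lemma Nat.lt_add_of_div_eq_div {a b p : ℕ} (hp : 0 < p) (h : a / p = b / p) : a < b + p := by
  have := Nat.lt_div_mul_add (a := a) hp
  have := Nat.div_mul_le_self b p
  rw [h] at *
  omega

theorem add_card_sub_one_mul_le_of_pairwise {lo hi : ℕ} (hS : S.Nonempty)
    (hg : ∀ i ∈ S, lo ≤ g i ∧ g i ≤ hi)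
    (hsep : (S : Set ι).Pairwise fun i j => (p : ℤ) ≤ |(g i : ℤ) - g j|) :
    lo + (#S - 1) * p ≤ hi := by
  obtain ⟨i₀, hi₀⟩ := hS
  have hlohi := hg i₀ hi₀
  rcases Nat.eq_zero_or_pos p with rfl | hp
  · simpa using hlohi.1.trans hlohi.2
  -- `p`-separated values in `[lo, hi]` have distinct quotients `(· - lo) / p`
  have hcard : #S ≤ (hi - lo) / p + 1 := by
    simpa using card_le_card_of_injOn (t := range ((hi - lo) / p + 1)) (fun i => (g i - lo) / p)
      (fun i hi => by
        simpa [Nat.lt_succ_iff] using Nat.div_le_div_right (c := p) (by have := hg i hi; omega))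
      (fun i hi j hj hij => by
        by_contra hne
        have hij' : (p : ℤ) ≤ |(g i : ℤ) - g j| := hsep hi hj hne
        have := Nat.lt_add_of_div_eq_div hp hij
        have := Nat.lt_add_of_div_eq_div hp hij.symm
        have := hg i hi
        have := hg j hj
        rw [le_abs'] at hij'
        omega)
  calc lo + (#S - 1) * p ≤ lo + (hi - lo) / p * p := by
        gcongr
        exact Nat.sub_le_of_le_add hcard
    _ ≤ lo + (hi - lo) := by gcongr; exact Nat.div_mul_le_self _ _
    _ = hi := by omega

theorem add_card_sub_one_mul_le_of_pairwise_of_le_abs_sub {h t ℓ : ℕ} (hph : p ≤ h)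
    (hS : S.Nonempty) (hg : ∀ i ∈ S, g i ≤ ℓ) (ht : t ≤ ℓ)
    (hsep : (S : Set ι).Pairwise fun i j => (p : ℤ) ≤ |(g i : ℤ) - g j|)
    (hfar : ∀ i ∈ S, (h : ℤ) ≤ |(t : ℤ) - g i|) :
    h + (#S - 1) * p ≤ ℓ := by
  classical
  set S₁ := S.filter (g · < t)
  set S₂ := S.filter (¬ g · < t)
  have hcard : #S₁ + #S₂ = #S := card_filter_add_card_filter_not _
  have below : ∀ i ∈ S₁, g i + h ≤ t := fun i hi => by
    rw [mem_filter] at hi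
    have hti := hfar i hi.1
    rw [le_abs'] at hti
    omega
  have above : ∀ i ∈ S₂, t + h ≤ g i ∧ g i ≤ ℓ := fun i hi => by
    rw [mem_filter] at hi
    have hti := hfar i hi.1
    have := hg i hi.1
    rw [le_abs'] at hti
    omega
  have span₁ (hne : S₁.Nonempty) : (#S₁ - 1) * p + h ≤ t := by
    obtain ⟨i, hi⟩ := hne
    have := below i hi
    have := add_card_sub_one_mul_le_of_pairwise ⟨i, hi⟩
      (fun i hi => ⟨Nat.zero_le _, Nat.le_sub_of_add_le (below i hi)⟩)
      (hsep.mono (coe_subset.2 (filter_subset _ S)))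
    omega
  have span₂ (hne : S₂.Nonempty) : t + h + (#S₂ - 1) * p ≤ ℓ :=
    add_card_sub_one_mul_le_of_pairwise hne above (hsep.mono (coe_subset.2 (filter_subset _ S)))
  rcases S₁.eq_empty_or_nonempty with h₁ | h₁ <;>
    rcases S₂.eq_empty_or_nonempty with h₂ | h₂
  · simp only [h₁, h₂, card_empty] at hcard
    exact absurd (card_eq_zero.1 hcard.symm) hS.ne_empty
  · rw [h₁, card_empty, zero_add] at hcard
    have := span₂ h₂
    rw [← hcard]
    omega
  · rw [h₂, card_empty, add_zero] at hcard
    have := span₁ h₁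
    rw [← hcard]
    omega
  · have := span₁ h₁
    have := span₂ h₂
    have hsplit : (#S - 1) * p = (#S₁ - 1) * p + (#S₂ - 1) * p + p := by
      rw [show #S - 1 = (#S₁ - 1) + (#S₂ - 1) + 1 by grind [card_pos]]
      ring
    omega

end Separated

namespace SimpleGraph

variable {V : Type} {G : SimpleGraph V}

lemma dist_le_two_of_adj_of_adj {u a b : V} (ha : G.Adj u a) (hb : G.Adj u b) :
    G.dist a b ≤ 2 :=
  dist_le (.cons ha.symm (.cons hb .nil))

lemma dist_le_three_of_adj_of_adj_of_adj {u v a b : V} (huv : G.Adj u v) (ha : G.Adj u a)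
    (hb : G.Adj v b) : G.dist a b ≤ 3 :=
  dist_le (.cons ha.symm (.cons huv (.cons hb .nil)))

lemma IsTree.disjoint_neighborFinset_of_adj [Fintype V] [DecidableRel G.Adj] (hT : G.IsTree)
    {u v : V} (huv : G.Adj u v) : Disjoint (G.neighborFinset u) (G.neighborFinset v) := by
  refine Finset.disjoint_left.2 fun y hu hv => ?_
  rw [mem_neighborFinset] at hu hv
  refine hT.dist_ne_of_adj y huv ?_
  rw [dist_eq_one_iff_adj.2 hu.symm, dist_eq_one_iff_adj.2 hv.symm]

lemma exists_adj_deltaTwo_eq [Fintype V] [DecidableRel G.Adj] {u v : V} (huv : G.Adj u v) :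
    ∃ u v, G.Adj u v ∧ deltaTwo G = G.degree u + G.degree v := by
  set D := {d : ℕ | ∃ u v : V, G.Adj u v ∧ d = G.degree u + G.degree v}
  have hfin : D.Finite := (Set.finite_range fun x : V × V => G.degree x.1 + G.degree x.2).subset
    (by rintro _ ⟨a, b, -, rfl⟩; exact ⟨(a, b), rfl⟩)
  have hne : D.Nonempty := ⟨_, u, v, huv, rfl⟩
  exact Nat.sSup_mem hne hfin.bddAbove

lemma exists_isLLabelling_lambdaNum [Finite V] (G : SimpleGraph V) (h p : ℕ) :
    ∃ f, IsLLabelling G h p (lambdaNum G h p) f := by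
  obtain ⟨n, ⟨e⟩⟩ := Finite.exists_equiv_fin V
  have hsep {u v : V} (huv : G.dist u v ≠ 0) :
      ((h + p : ℕ) : ℤ) ≤ |(((h + p) * e u : ℕ) : ℤ) - ((h + p) * e v : ℕ)| := by
    have hne : u ≠ v := by
      rintro rfl
      exact huv dist_self
    have hne' : ((e u : ℕ) : ℤ) - (e v : ℕ) ≠ 0 :=
      sub_ne_zero.2 (by exact_mod_cast Fin.val_injective.ne (e.injective.ne hne))
    push_cast
    rw [← mul_sub, abs_mul, abs_of_nonneg (by positivity)]
    exact le_mul_of_one_le_right (by positivity) (Int.one_le_abs hne')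
  refine Nat.sInf_mem (s := {ℓ : ℕ | ∃ f : V → ℕ, IsLLabelling G h p ℓ f})
    ⟨(h + p) * n, fun v => (h + p) * e v, fun v => ?_, fun u v huv => ?_, fun u v huv => ?_⟩
  · exact Nat.mul_le_mul_left _ (e v).isLt.le
  · exact le_trans (by push_cast; omega) (hsep (by omega))
  · exact le_trans (by push_cast; omega) (hsep (by omega))

namespace IsLLabelling

variable {h p ℓ : ℕ} {f : V → ℕ}

lemma le_abs_sub (hf : IsLLabelling G h p ℓ f) (hph : p ≤ h) (hG : G.Connected) {a b : V}
    (hab : a ≠ b) (hd : G.dist a b ≤ 3) : (p : ℤ) ≤ |(f a : ℤ) - f b| := by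
  have : 1 ≤ G.dist a b := Nat.one_le_iff_ne_zero.2 fun h0 => hab (hG.dist_eq_zero_iff.1 h0)
  interval_cases hd' : G.dist a b
  · exact (Int.ofNat_le.2 hph).trans (hf.2.1 a b hd')
  · exact hf.2.2 a b (.inl hd')
  · exact hf.2.2 a b (.inr hd')

lemma pairwise_le_abs_sub (hf : IsLLabelling G h p ℓ f) (hph : p ≤ h) (hG : G.Connected)
    {S : Set V} (hS : S.Pairwise fun a b => G.dist a b ≤ 3) :
    S.Pairwise fun a b => (p : ℤ) ≤ |(f a : ℤ) - f b| :=
  fun _ ha _ hb hab => hf.le_abs_sub hph hG hab (hS ha hb hab)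

variable [Fintype V] [DecidableRel G.Adj]

lemma degree_add_degree_sub_one_mul_le (hf : IsLLabelling G h p ℓ f) (hph : p ≤ h)
    (hT : G.IsTree) {u v : V} (huv : G.Adj u v) :
    (G.degree u + G.degree v - 1) * p ≤ ℓ := by
  classical
  have hcard : #(G.neighborFinset u ∪ G.neighborFinset v) = G.degree u + G.degree v := by
    rw [card_union_of_disjoint (hT.disjoint_neighborFinset_of_adj huv),
      card_neighborFinset_eq_degree, card_neighborFinset_eq_degree]
  have hclose : (↑(G.neighborFinset u ∪ G.neighborFinset v) : Set V).Pairwise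
      fun a b => G.dist a b ≤ 3 := by
    intro a ha b hb _
    simp only [coe_union, Set.mem_union, mem_coe, mem_neighborFinset] at ha hb
    rcases ha with ha | ha <;> rcases hb with hb | hb
    · exact (dist_le_two_of_adj_of_adj ha hb).trans (by norm_num)
    · exact dist_le_three_of_adj_of_adj_of_adj huv ha hb
    · exact dist_le_three_of_adj_of_adj_of_adj huv.symm ha hb
    · exact (dist_le_two_of_adj_of_adj ha hb).trans (by norm_num)
  have := add_card_sub_one_mul_le_of_pairwise (lo := 0) (hi := ℓ)
    ⟨v, mem_union_left _ ((mem_neighborFinset _ _ _).2 huv)⟩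
    (fun a _ => ⟨Nat.zero_le _, hf.1 a⟩) (hf.pairwise_le_abs_sub hph hT.connected hclose)
  rwa [hcard, zero_add] at this

lemma add_degree_sub_one_mul_le (hf : IsLLabelling G h p ℓ f) (hph : p ≤ h)
    (hG : G.Connected) {u : V} (hu : 0 < G.degree u) :
    h + (G.degree u - 1) * p ≤ ℓ := by
  have hclose : (↑(G.neighborFinset u) : Set V).Pairwise fun a b => G.dist a b ≤ 3 := by
    intro a ha b hb _
    rw [mem_coe, mem_neighborFinset] at ha hb
    exact (dist_le_two_of_adj_of_adj ha hb).trans (by norm_num)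
  rw [← card_neighborFinset_eq_degree]
  refine add_card_sub_one_mul_le_of_pairwise_of_le_abs_sub hph
    (card_pos.1 (by rwa [card_neighborFinset_eq_degree])) (fun a _ => hf.1 a) (hf.1 u)
    (hf.pairwise_le_abs_sub hph hG hclose) fun a ha => hf.2.1 u a ?_
  exact dist_eq_one_iff_adj.2 ((mem_neighborFinset _ _ _).1 ha)

end IsLLabelling

end SimpleGraph

theorem stmt0_general {V : Type} [Fintype V] (G : SimpleGraph V) [DecidableRel G.Adj]
    (hT : G.IsTree) (hdiam : ∃ u v : V, 3 ≤ G.dist u v)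
    (h p : ℕ) (hph : p ≤ h) :
    max ((deltaTwo G - 1) * p) (h + (G.maxDegree - 1) * p) ≤ lambdaNum G h p := by
  obtain ⟨a, b, hab⟩ := hdiam
  have hne : a ≠ b := by
    rintro rfl
    simp at hab
  obtain ⟨q⟩ := hT.connected.preconnected a b
  have hedge := q.adj_snd (Walk.not_nil_of_ne hne)
  obtain ⟨f, hf⟩ := exists_isLLabelling_lambdaNum G h p
  obtain ⟨u, v, huv, hΔ₂⟩ := exists_adj_deltaTwo_eq hedge
  have : Nonempty V := ⟨a⟩
  obtain ⟨w, hΔ⟩ := G.exists_maximal_degree_vertex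
  have hw : 0 < G.degree w :=
    hΔ ▸ ((G.degree_pos_iff_exists_adj a).2 ⟨_, hedge⟩).trans_le (G.degree_le_maxDegree a)
  refine max_le ?_ ?_
  · rw [hΔ₂]
    exact hf.degree_add_degree_sub_one_mul_le hph hT huv
  · rw [hΔ]
    exact hf.add_degree_sub_one_mul_le hph hT.connected hw

theorem stmt0 {V : Type} [Fintype V] (G : SimpleGraph V) [DecidableRel G.Adj]
    (hT : G.IsTree) (hdiam : ∃ u v : V, 3 ≤ G.dist u v)
    (h p : ℕ) (hp : 1 ≤ p) (hph : p ≤ h) :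
    max ((deltaTwo G - 1) * p) (h + (G.maxDegree - 1) * p) ≤ lambdaNum G h p :=
  stmt0_general G hT hdiam h p hph
end

section
/- Let T be a finite tree with diameter at least 3, and let h ≥ p ≥ 1 be integers. Then T admits an elegant L(h,p,p)-labelling with span h + 2(Δ(T) − 1)·p; consequently λ_{h,p,p}(T) ≤ λ*_{h,p,p}(T) ≤ h + 2(Δ(T) − 1)·p. -/
open SimpleGraph

/-!
Root the tree at a vertex `r`. Colour the vertices greedily in order of increasing depth so that
vertices at distance two get different colours: the vertices at distance two from `v` that are
no deeper than `v` are the other neighbours of the parent of `v`, so `Δ` colours suffice. A vertex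
of colour `c` gets the label `p c` on an even level and `h + (Δ - 1) p + p c` on an odd level. The
two levels then use the windows `[0, (Δ - 1) p]` and `[h + (Δ - 1) p, h + 2 (Δ - 1) p]`, which are
`h` apart. Vertices at distance one or three lie on different levels, vertices at distance two on
the same level with different colours, and the window of the other level is the circular interval
that makes the labelling elegant.
-/

open Finset

namespace SimpleGraph

variable {V : Type}

theorem colorable_of_card_adj_le_lt {α : Type*} [LinearOrder α] [Fintype V] (H : SimpleGraph V)
    [DecidableRel H.Adj] (f : V → α) (k : ℕ) (hk : ∀ v, #{x | H.Adj x v ∧ f x ≤ f v} < k) :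
    H.Colorable k := by
  classical
  suffices ∀ s : Finset V, ∃ c : V → ℕ, (∀ v, c v < k) ∧
      ∀ u ∈ s, ∀ v ∈ s, H.Adj u v → c u ≠ c v by
    obtain ⟨c, hck, hc⟩ := this univ
    exact (colorable_iff_exists_bdd_nat_coloring k).2
      ⟨Coloring.mk c fun huv => hc _ (mem_univ _) _ (mem_univ _) huv, hck⟩
  intro s
  induction s using Finset.induction_on_max_value f with
  | empty => exact ⟨fun _ => 0, fun v => (Nat.zero_le _).trans_lt (hk v), by simp⟩
  | insert a s _ hmax ih =>
    obtain ⟨c, hck, hc⟩ := ih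
    obtain ⟨n, hnk, hn⟩ : ∃ n ∈ range k, n ∉ ({x | H.Adj x a ∧ f x ≤ f a} : Finset V).image c :=
      exists_mem_notMem_of_card_lt_card (card_image_le.trans_lt (by simpa using hk a))
    have hfresh : ∀ x ∈ s, H.Adj x a → c x ≠ n := fun x hx hxa hxn =>
      hn (mem_image.2 ⟨x, by simp [hxa, hmax x hx], hxn⟩)
    refine ⟨Function.update c a n, fun v => ?_, ?_⟩
    · rcases eq_or_ne v a with rfl | hv
      · simpa using hnk
      · simpa [hv] using hck v
    · intro u hu v hv huv
      rw [mem_insert] at hu hv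
      by_cases hua : u = a <;> by_cases hva : v = a
      · exact (huv.ne (hua.trans hva.symm)).elim
      · subst hua
        simpa [hva] using (hfresh v (hv.resolve_left hva) huv.symm).symm
      · subst hva
        simpa [hua] using hfresh u (hu.resolve_left hua) huv
      · simpa [hua, hva] using hc u (hu.resolve_left hua) v (hv.resolve_left hva) huv

def distTwoGraph (G : SimpleGraph V) : SimpleGraph V where
  Adj u v := G.dist u v = 2
  symm := ⟨fun u v h => by rwa [dist_comm]⟩
  loopless := ⟨fun u h => by simp at h⟩

noncomputable instance (G : SimpleGraph V) : DecidableRel G.distTwoGraph.Adj :=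
  fun u v => inferInstanceAs (Decidable (G.dist u v = 2))

theorem exists_adj_adj_of_dist_eq_two {G : SimpleGraph V} {u v : V} (h : G.dist u v = 2) :
    ∃ w, G.Adj u w ∧ G.Adj w v := by
  have : G.edist u v = 2 := by
    rw [← (Reachable.of_dist_ne_zero (h ▸ two_ne_zero)).coe_dist_eq_edist, h]; rfl
  obtain ⟨-, -, w, hw⟩ := edist_eq_two_iff.1 this
  rw [mem_commonNeighbors] at hw
  exact ⟨w, hw.1, hw.2.symm⟩

theorem Coloring.even_dist_iff {G : SimpleGraph V} (hG : G.Preconnected) (s : G.Coloring Bool)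
    (u v : V) : Even (G.dist u v) ↔ (s u ↔ s v) := by
  obtain ⟨p, hp⟩ := (hG u v).exists_walk_length_eq_dist
  rw [← hp]
  exact s.even_length_iff_congr p

namespace IsTree

variable {G : SimpleGraph V} (hT : G.IsTree)
include hT

theorem eq_penultimate_of_adj_of_dist_lt {r v w : V} {P : G.Walk r v} (hP : P.IsPath)
    (hadj : G.Adj v w) (hlt : G.dist r w < G.dist r v) : w = P.penultimate := by
  classical
  obtain ⟨Q, hQ, hQlen⟩ := hT.connected.exists_path_of_dist r w
  have hv : v ∉ Q.support := fun hv =>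
    ((dist_le (Q.takeUntil v hv)).trans (Q.length_takeUntil_le_length hv)).not_gt (hQlen ▸ hlt)
  exact hT.isAcyclic.eq_penultimate_of_adj_end hP hadj
    (hT.isAcyclic.mem_support_of_ne_mem_support_of_adj_of_isPath hP hQ hadj hv)

theorem exists_adj_adj_dist_lt_of_dist_eq_two {r x v : V} (h2 : G.dist x v = 2)
    (hle : G.dist r x ≤ G.dist r v) : ∃ y, G.Adj x y ∧ G.Adj y v ∧ G.dist r y < G.dist r v := by
  obtain ⟨y, hxy, hyv⟩ := exists_adj_adj_of_dist_eq_two h2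
  refine ⟨y, hxy, hyv, ?_⟩
  rcases hT.dist_eq_dist_add_one_of_adj r hyv with h | h
  -- `y` is a child of `v`, and `x`, being no deeper than `v`, would be a second parent of `y`
  · have hxv : x ≠ v := by rintro rfl; simp at h2
    obtain ⟨Q, hQ, -⟩ := hT.connected.exists_path_of_dist r y
    rcases hT.dist_eq_dist_add_one_of_adj r hxy with h' | h'
    · omega
    · exact absurd ((hT.eq_penultimate_of_adj_of_dist_lt hQ hxy.symm (by omega)).trans
        (hT.eq_penultimate_of_adj_of_dist_lt hQ hyv (by omega)).symm) hxv
  · omega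

theorem card_distTwoGraph_adj_le [Fintype V] [DecidableRel G.Adj] (r v : V) :
    #{x | G.distTwoGraph.Adj x v ∧ G.dist r x ≤ G.dist r v} ≤ G.maxDegree - 1 := by
  classical
  obtain ⟨P, hP, -⟩ := hT.connected.exists_path_of_dist r v
  have hpen : ∀ x, G.dist x v = 2 → G.dist r x ≤ G.dist r v →
      G.Adj P.penultimate x ∧ G.Adj P.penultimate v := fun x h2 hle => by
    obtain ⟨y, hxy, hyv, hlt⟩ := hT.exists_adj_adj_dist_lt_of_dist_eq_two h2 hle
    obtain rfl := hT.eq_penultimate_of_adj_of_dist_lt hP hyv.symm hlt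
    exact ⟨hxy.symm, hyv⟩
  set S : Finset V := {x | G.distTwoGraph.Adj x v ∧ G.dist r x ≤ G.dist r v}
  rcases S.eq_empty_or_nonempty with hS | ⟨x, hx⟩
  · simp [hS]
  have hsub : S ⊆ (G.neighborFinset P.penultimate).erase v := fun y hy => by
    simp only [S, mem_filter, mem_univ, true_and] at hy
    have hyv : y ≠ v := by rintro rfl; simp [distTwoGraph] at hy
    simpa [hyv] using (hpen y hy.1 hy.2).1
  simp only [S, mem_filter, mem_univ, true_and] at hx
  calc #S ≤ _ := card_le_card hsub
    _ = G.degree P.penultimate - 1 :=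
      card_erase_of_mem ((mem_neighborFinset _ _ _).2 (hpen x hx.1 hx.2).2)
    _ ≤ _ := Nat.sub_le_sub_right (G.degree_le_maxDegree _) 1

theorem colorable_distTwoGraph [Fintype V] [DecidableRel G.Adj] :
    G.distTwoGraph.Colorable (G.maxDegree - 1 + 1) := by
  obtain ⟨r⟩ := hT.connected.nonempty
  exact colorable_of_card_adj_le_lt _ (G.dist r) _ fun v =>
    Nat.lt_succ_of_le (hT.card_distTwoGraph_adj_le r v)

end IsTree


section Labelling

variable {G : SimpleGraph V}

def windowStart (h p k : ℕ) : Bool → ℕ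
  | true => h + p * k
  | false => 0

def bipartiteLabel (s : G.Coloring Bool) (c : V → ℕ) (h p k : ℕ) (v : V) : ℕ :=
  windowStart h p k (s v) + p * c v

variable {h p k i j : ℕ}

theorem windowStart_add_le (b : Bool) (hi : i ≤ p * k) :
    windowStart h p k b + i ≤ h + 2 * k * p := by
  cases b <;> simp only [windowStart] <;> linarith

theorem le_abs_windowStart_add_sub {b b' : Bool} (hb : b ≠ b') (hi : i ≤ p * k) (hj : j ≤ p * k) :
    (h : ℤ) ≤ |((windowStart h p k b + i : ℕ) : ℤ) - ((windowStart h p k b' + j : ℕ) : ℤ)| := by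
  cases b <;> cases b' <;> simp only [ne_eq, not_true_eq_false] at hb <;>
    simp only [windowStart] <;> push_cast
  · exact le_abs.2 (Or.inr (by linarith))
  · exact le_abs.2 (Or.inl (by linarith))

theorem natCast_windowStart_add_ne (hh : 1 ≤ h) {b b' : Bool} (hb : b ≠ b') (hi : i ≤ p * k)
    (hj : j ≤ p * k) :
    ((windowStart h p k b + i : ℕ) : ZMod (h + 2 * k * p + 1)) ≠
      ((windowStart h p k b' + j : ℕ) : ZMod (h + 2 * k * p + 1)) := by
  intro heq
  have hval := congrArg ZMod.val heq
  rw [ZMod.val_cast_of_lt (Nat.lt_succ_of_le (windowStart_add_le b hi)),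
    ZMod.val_cast_of_lt (Nat.lt_succ_of_le (windowStart_add_le b' hj))] at hval
  have hgap := le_abs_windowStart_add_sub (h := h) hb hi hj
  rw [hval, sub_self, abs_zero] at hgap
  omega

theorem isLLabelling_bipartiteLabel (hG : G.Preconnected) (s : G.Coloring Bool)
    {c : G.distTwoGraph.Coloring ℕ} (hck : ∀ v, c v ≤ k) (hph : p ≤ h) :
    IsLLabelling G h p (h + 2 * k * p) (bipartiteLabel s c h p k) := by
  have hcp : ∀ v, p * c v ≤ p * k := fun v => Nat.mul_le_mul_left p (hck v)
  have hopp : ∀ u v, s u ≠ s v →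
      (h : ℤ) ≤ |(bipartiteLabel s c h p k u : ℤ) - bipartiteLabel s c h p k v| :=
    fun u v huv => le_abs_windowStart_add_sub huv (hcp u) (hcp v)
  refine ⟨fun v => windowStart_add_le _ (hcp v),
    fun u v h1 => hopp u v (s.valid (dist_eq_one_iff_adj.1 h1)), fun u v h23 => ?_⟩
  rcases h23 with h2 | h3
  · have hs : s u = s v := Bool.eq_iff_iff.2 ((s.even_dist_iff hG u v).1 (h2 ▸ even_two))
    have hne : (c u : ℤ) - c v ≠ 0 := sub_ne_zero.2 (by exact_mod_cast c.valid h2)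
    simp only [bipartiteLabel, hs]
    push_cast
    calc (p : ℤ) = |(p : ℤ)| * 1 := by simp
      _ ≤ |(p : ℤ)| * |(c u : ℤ) - c v| := by gcongr; exact Int.one_le_abs hne
      _ = _ := by rw [← abs_mul]; ring_nf
  · have hs : s u ≠ s v := fun hs => by
      have := (s.even_dist_iff hG u v).2 (Bool.eq_iff_iff.1 hs)
      rw [h3] at this
      exact absurd this (by decide)
    exact (Nat.cast_le.2 hph).trans (hopp u v hs)

theorem isElegantLLabelling_bipartiteLabel (hG : G.Preconnected) (s : G.Coloring Bool)
    {c : G.distTwoGraph.Coloring ℕ} (hck : ∀ v, c v ≤ k) (hh : 1 ≤ h) (hph : p ≤ h) :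
    IsElegantLLabelling G h p (h + 2 * k * p) (bipartiteLabel s c h p k) := by
  have hcp : ∀ v, p * c v ≤ p * k := fun v => Nat.mul_le_mul_left p (hck v)
  refine ⟨isLLabelling_bipartiteLabel hG s hck hph,
    fun u => {x | ∃ i : ℕ, i ≤ p * k ∧ x = (windowStart h p k (!s u) : ZMod _) + (i : ZMod _)},
    fun u => ⟨_, _, rfl⟩, fun u w huw => ⟨p * c w, hcp w, ?_⟩, fun u v huv => ?_⟩
  · have : s w = !s u := Bool.eq_not_iff.2 (s.valid huw).symm
    simp [bipartiteLabel, this]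
  · refine Set.eq_empty_iff_forall_notMem.2 ?_
    rintro x ⟨⟨i, hi, rfl⟩, ⟨j, hj, hx⟩⟩
    refine natCast_windowStart_add_ne hh (b := !s u) (b' := !s v) (by simpa using s.valid huv)
      hi hj ?_
    push_cast
    exact hx

theorem IsBipartite.exists_isElegantLLabelling (hG : G.Preconnected) (hbip : G.IsBipartite)
    (hc : G.distTwoGraph.Colorable (k + 1)) (hh : 1 ≤ h) (hph : p ≤ h) :
    ∃ f, IsElegantLLabelling G h p (h + 2 * k * p) f := by
  obtain ⟨s⟩ := hbip
  obtain ⟨c, hck⟩ := (colorable_iff_exists_bdd_nat_coloring _).1 hc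
  exact ⟨_, isElegantLLabelling_bipartiteLabel hG (recolorOfEquiv G finTwoEquiv s)
    (fun v => Nat.lt_succ_iff.1 (hck v)) hh hph⟩

end Labelling

theorem IsTree.exists_isElegantLLabelling [Fintype V] {G : SimpleGraph V} [DecidableRel G.Adj]
    (hT : G.IsTree) {h p : ℕ} (hh : 1 ≤ h) (hph : p ≤ h) :
    ∃ f, IsElegantLLabelling G h p (h + 2 * (G.maxDegree - 1) * p) f :=
  hT.isBipartite.exists_isElegantLLabelling hT.connected.preconnected hT.colorable_distTwoGraph
    hh hph

end SimpleGraph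

theorem lambdaNum_le_lambdaStar {V : Type} {G : SimpleGraph V} {h p ℓ : ℕ} {f : V → ℕ}
    (hf : IsElegantLLabelling G h p ℓ f) : lambdaNum G h p ≤ lambdaStar G h p := by
  obtain ⟨g, hg⟩ := Nat.sInf_mem (s := {ℓ | ∃ f, IsElegantLLabelling G h p ℓ f}) ⟨ℓ, f, hf⟩
  exact Nat.sInf_le ⟨g, hg.1⟩

theorem stmt1_general {V : Type} [Fintype V] (G : SimpleGraph V) [DecidableRel G.Adj]
    (hT : G.IsTree)
    (h p : ℕ) (hp : 1 ≤ p) (hph : p ≤ h) :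
    (∃ f : V → ℕ, IsElegantLLabelling G h p (h + 2 * (G.maxDegree - 1) * p) f) ∧
    lambdaNum G h p ≤ lambdaStar G h p ∧
    lambdaStar G h p ≤ h + 2 * (G.maxDegree - 1) * p := by
  obtain ⟨f, hf⟩ := hT.exists_isElegantLLabelling (hp.trans hph) hph
  exact ⟨⟨f, hf⟩, lambdaNum_le_lambdaStar hf, Nat.sInf_le ⟨f, hf⟩⟩

theorem stmt1 {V : Type} [Fintype V] (G : SimpleGraph V) [DecidableRel G.Adj]
    (hT : G.IsTree) (hdiam : ∃ u v : V, 3 ≤ G.dist u v)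
    (h p : ℕ) (hp : 1 ≤ p) (hph : p ≤ h) :
    (∃ f : V → ℕ, IsElegantLLabelling G h p (h + 2 * (G.maxDegree - 1) * p) f) ∧
    lambdaNum G h p ≤ lambdaStar G h p ∧
    lambdaStar G h p ≤ h + 2 * (G.maxDegree - 1) * p :=
  stmt1_general G hT h p hp hph
end

section
/- Let h ≥ p ≥ 1 and m ≥ 2 be integers. Then λ_{h,p,p}(T̂_{m,2}) ≥ h + 2mp. -/
open SimpleGraph

namespace Stmt4Aux

open Finset

variable {V : Type} {G : SimpleGraph V}

lemma false_of_two_paths (hA : G.IsAcyclic) {u v : V} {P Q : G.Walk u v}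
    (hP : P.IsPath) (hQ : Q.IsPath) (hne : P.length ≠ Q.length) : False := by
  have : (⟨P, hP⟩ : G.Path u v) = ⟨Q, hQ⟩ := hA.path_unique _ _
  exact hne (congrArg (fun q : G.Path u v => q.1.length) this)

lemma isPath1 {a b : V} (h1 : G.Adj a b) : (SimpleGraph.Walk.cons h1 SimpleGraph.Walk.nil).IsPath := by
  simp [SimpleGraph.Walk.isPath_def, h1.ne]

lemma isPath2 {a b c : V} (h1 : G.Adj a b) (h2 : G.Adj b c) (hac : a ≠ c) :
    (SimpleGraph.Walk.cons h1 (SimpleGraph.Walk.cons h2 SimpleGraph.Walk.nil)).IsPath := by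
  simp [SimpleGraph.Walk.isPath_def, h1.ne, h2.ne, hac]

lemma isPath3 {a b c d : V} (h1 : G.Adj a b) (h2 : G.Adj b c) (h3 : G.Adj c d)
    (hac : a ≠ c) (had : a ≠ d) (hbd : b ≠ d) :
    (SimpleGraph.Walk.cons h1 (SimpleGraph.Walk.cons h2 (SimpleGraph.Walk.cons h3
      SimpleGraph.Walk.nil))).IsPath := by
  simp [SimpleGraph.Walk.isPath_def, h1.ne, h2.ne, h3.ne, hac, had, hbd]

lemma nadj_of_path2 (hA : G.IsAcyclic) {a b c : V} (h1 : G.Adj a b) (h2 : G.Adj b c)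
    (hac : a ≠ c) : ¬ G.Adj a c := by
  intro had
  exact false_of_two_paths hA (isPath1 had) (isPath2 h1 h2 hac) (by simp)

lemma nadj_of_path3 (hA : G.IsAcyclic) {a b c d : V} (h1 : G.Adj a b) (h2 : G.Adj b c)
    (h3 : G.Adj c d) (hac : a ≠ c) (had : a ≠ d) (hbd : b ≠ d) : ¬ G.Adj a d := by
  intro h
  exact false_of_two_paths hA (isPath1 h) (isPath3 h1 h2 h3 hac had hbd) (by simp)

lemma no_common_of_path3 (hA : G.IsAcyclic) {a b c d x : V} (h1 : G.Adj a b) (h2 : G.Adj b c)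
    (h3 : G.Adj c d) (hac : a ≠ c) (had : a ≠ d) (hbd : b ≠ d)
    (hx1 : G.Adj a x) (hx2 : G.Adj x d) : False :=
  false_of_two_paths hA (isPath2 hx1 hx2 had) (isPath3 h1 h2 h3 hac had hbd) (by simp)

lemma dist_eq_two (hc : G.Connected) {u v w : V} (huv : u ≠ v) (hna : ¬ G.Adj u v)
    (h1 : G.Adj u w) (h2 : G.Adj w v) : G.dist u v = 2 := by
  have hle : G.dist u v ≤ 2 := by
    simpa using SimpleGraph.dist_le (SimpleGraph.Walk.cons h1 (SimpleGraph.Walk.cons h2 SimpleGraph.Walk.nil))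
  have h0 : G.dist u v ≠ 0 := fun hh => huv ((hc u v).dist_eq_zero_iff.mp hh)
  have h1' : G.dist u v ≠ 1 := fun hh => hna (SimpleGraph.dist_eq_one_iff_adj.mp hh)
  omega

lemma exists_mid_of_dist_eq_two (hc : G.Connected) {u v : V} (hd : G.dist u v = 2) :
    ∃ w, G.Adj u w ∧ G.Adj w v := by
  obtain ⟨W, hW⟩ := hc.exists_walk_length_eq_dist u v
  rw [hd] at hW
  cases W with
  | nil => simp at hW
  | cons h1 W' =>
    cases W' with
    | nil => simp at hW
    | cons h2 W'' =>
      cases W'' with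
      | nil => exact ⟨_, h1, h2⟩
      | cons h3 W''' => simp [SimpleGraph.Walk.length_cons] at hW

lemma dist_eq_three (hc : G.Connected) {u v a b : V} (huv : u ≠ v) (hna : ¬ G.Adj u v)
    (hmid : ∀ w, G.Adj u w → G.Adj w v → False)
    (h1 : G.Adj u a) (h2 : G.Adj a b) (h3 : G.Adj b v) : G.dist u v = 3 := by
  have hle : G.dist u v ≤ 3 := by
    simpa using SimpleGraph.dist_le (SimpleGraph.Walk.cons h1 (SimpleGraph.Walk.cons h2
      (SimpleGraph.Walk.cons h3 SimpleGraph.Walk.nil)))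
  have h0 : G.dist u v ≠ 0 := by
    exact fun hh => huv ((hc u v).dist_eq_zero_iff.mp hh)
  have h1' : G.dist u v ≠ 1 := fun hh => hna (SimpleGraph.dist_eq_one_iff_adj.mp hh)
  have h2' : G.dist u v ≠ 2 := by
    intro hh
    obtain ⟨w, hw1, hw2⟩ := exists_mid_of_dist_eq_two hc hh
    exact hmid w hw1 hw2
  omega

lemma pack (p : ℤ) (hp : 0 < p) : ∀ (n : ℕ) (T : Finset ℤ), T.card = n + 1 →
    (∀ a ∈ T, ∀ b ∈ T, a ≠ b → p ≤ |a - b|) → ∀ lo hi : ℤ, (∀ x ∈ T, lo ≤ x ∧ x ≤ hi) →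
    lo + n * p ≤ hi := by
  intro n
  induction n with
  | zero =>
    intro T hT hsep lo hi hb
    obtain ⟨x, hx⟩ := Finset.card_pos.mp (by rw [hT]; omega)
    have := hb x hx
    simpa using le_trans this.1 this.2
  | succ n ih =>
    intro T hT hsep lo hi hb
    have hne : T.Nonempty := Finset.card_pos.mp (by rw [hT]; omega)
    set M := T.max' hne with hM
    have hMmem : M ∈ T := T.max'_mem hne
    have hcard : (T.erase M).card = n + 1 := by
      rw [Finset.card_erase_of_mem hMmem, hT]
      omega
    have hbd : ∀ x ∈ T.erase M, lo ≤ x ∧ x ≤ M - p := by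
      intro x hx
      obtain ⟨hxne, hxT⟩ := Finset.mem_erase.mp hx
      refine ⟨(hb x hxT).1, ?_⟩
      have hxle : x ≤ M := T.le_max' x hxT
      have := hsep x hxT M hMmem hxne
      rw [abs_sub_comm, abs_of_nonneg (by linarith)] at this
      linarith
    have := ih (T.erase M) hcard
      (fun a ha b hb' hab => hsep a (Finset.mem_erase.mp ha).2 b (Finset.mem_erase.mp hb').2 hab)
      lo (M - p) hbd
    have hMhi : M ≤ hi := (hb M hMmem).2
    push_cast
    push_cast at this
    linarith

lemma pack_v (p : ℤ) (hp : 0 < p) (F : V → ℤ) (T : Finset V) (hne : T.Nonempty)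
    (hsep : ∀ a ∈ T, ∀ b ∈ T, a ≠ b → p ≤ |F a - F b|) (lo hi : ℤ)
    (hb : ∀ x ∈ T, lo ≤ F x ∧ F x ≤ hi) : lo + ((T.card : ℤ) - 1) * p ≤ hi := by
  have hinj : Set.InjOn F T := by
    intro a ha b hb' hab
    by_contra hne'
    have := hsep a ha b hb' hne'
    rw [hab] at this
    simp at this
    linarith
  have hcard : (T.image F).card = T.card := Finset.card_image_of_injOn hinj
  obtain ⟨n, hn⟩ : ∃ n, T.card = n + 1 := ⟨T.card - 1, by
    have := Finset.card_pos.mpr hne; omega⟩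
  have hpk := pack p hp n (T.image F) (by rw [hcard, hn])
    (by
      intro a ha b hb' hab
      obtain ⟨x, hx, rfl⟩ := Finset.mem_image.mp ha
      obtain ⟨y, hy, rfl⟩ := Finset.mem_image.mp hb'
      exact hsep x hx y hy (fun hxy => hab (by rw [hxy])))
    lo hi
    (by
      intro a ha
      obtain ⟨x, hx, rfl⟩ := Finset.mem_image.mp ha
      exact hb x hx)
  rw [hn]
  push_cast
  push_cast at hpk
  linarith

end Stmt4Aux


namespace Stmt4Aux

lemma main {V : Type} [Fintype V] (G : SimpleGraph V) [DecidableRel G.Adj]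
    (hT : G.IsTree) (m : ℕ) (r : V)
    (hr : G.degree r = m + 1)
    (hnbr : ∀ v : V, G.Adj r v → G.degree v = m + 1)
    (h p ℓ : ℕ) (hp : 1 ≤ p) (hph : p ≤ h)
    (f : V → ℕ) (hf : IsLLabelling G h p ℓ f)
    (hex : ∃ u, G.Adj r u ∧ f u < f r) :
    h + 2 * m * p ≤ ℓ := by
  classical
  obtain ⟨hf0, hf1, hf2⟩ := hf
  have hc : G.Connected := hT.1
  have hA : G.IsAcyclic := hT.2
  set N := G.neighborFinset r with hN
  have hBne : (N.filter (fun u => f u < f r)).Nonempty := by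
    obtain ⟨u, hu1, hu2⟩ := hex
    exact ⟨u, Finset.mem_filter.mpr ⟨(G.mem_neighborFinset r u).mpr hu1, hu2⟩⟩
  obtain ⟨y, hyB, hymax⟩ := Finset.exists_max_image _ f hBne
  have hyN : y ∈ N := (Finset.mem_filter.mp hyB).1
  have hyr : f y < f r := (Finset.mem_filter.mp hyB).2
  have hadj_ry : G.Adj r y := (G.mem_neighborFinset r y).mp hyN
  have hadjN : ∀ a ∈ N, G.Adj r a := fun a ha => (G.mem_neighborFinset r a).mp ha
  set C : Finset V := G.neighborFinset y \ {r} with hC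
  have hadjC : ∀ z ∈ C, G.Adj y z ∧ z ≠ r := by
    intro z hz
    rw [hC, Finset.mem_sdiff, Finset.mem_singleton] at hz
    exact ⟨(G.mem_neighborFinset y z).mp hz.1, hz.2⟩
  set S : Finset V := insert r N with hS
  set W : Finset V := S ∪ C with hW
  have hcase : ∀ a ∈ W, a = r ∨ a ∈ N ∨ a ∈ C := by
    intro a ha
    rw [hW, Finset.mem_union, hS, Finset.mem_insert] at ha
    tauto
  -- distance facts
  have hWd : ∀ a ∈ W, ∀ b ∈ W, a ≠ b →
      (G.dist a b = 1 ∨ (G.dist a b = 2 ∨ G.dist a b = 3)) := by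
    have case_rC : ∀ b ∈ C, r ≠ b → G.dist r b = 2 := by
      intro b hb hrb
      obtain ⟨h1, h2⟩ := hadjC b hb
      exact dist_eq_two hc hrb (nadj_of_path2 hA hadj_ry h1 hrb) hadj_ry h1
    have case_NC : ∀ a ∈ N, ∀ b ∈ C, a ≠ y → a ≠ b → G.dist a b = 3 := by
      intro a ha b hb hay hab
      obtain ⟨h3, hbr⟩ := hadjC b hb
      have h1 : G.Adj a r := (hadjN a ha).symm
      have hrb : r ≠ b := hbr.symm
      exact dist_eq_three hc hab
        (nadj_of_path3 hA h1 hadj_ry h3 hay hab hrb)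
        (fun w hw1 hw2 => no_common_of_path3 hA h1 hadj_ry h3 hay hab hrb hw1 hw2)
        h1 hadj_ry h3
    have case_NN : ∀ a ∈ N, ∀ b ∈ N, a ≠ b → G.dist a b = 2 := by
      intro a ha b hb hab
      have h1 : G.Adj r a := hadjN a ha
      have h2 : G.Adj r b := hadjN b hb
      exact dist_eq_two hc hab (nadj_of_path2 hA h1.symm h2 hab) h1.symm h2
    have case_CC : ∀ a ∈ C, ∀ b ∈ C, a ≠ b → G.dist a b = 2 := by
      intro a ha b hb hab
      have h1 : G.Adj y a := (hadjC a ha).1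
      have h2 : G.Adj y b := (hadjC b hb).1
      exact dist_eq_two hc hab (nadj_of_path2 hA h1.symm h2 hab) h1.symm h2
    intro a ha b hb hab
    rcases hcase a ha with rfl | haN | haC <;> rcases hcase b hb with rfl | hbN | hbC
    · exact absurd rfl hab
    · exact Or.inl (SimpleGraph.dist_eq_one_iff_adj.mpr (hadjN b hbN))
    · exact Or.inr (Or.inl (case_rC b hbC hab))
    · rw [SimpleGraph.dist_comm]
      exact Or.inl (SimpleGraph.dist_eq_one_iff_adj.mpr (hadjN a haN))
    · exact Or.inr (Or.inl (case_NN a haN b hbN hab))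
    · by_cases hay : a = y
      · subst hay
        exact Or.inl (SimpleGraph.dist_eq_one_iff_adj.mpr (hadjC b hbC).1)
      · exact Or.inr (Or.inr (case_NC a haN b hbC hay hab))
    · rw [SimpleGraph.dist_comm]
      exact Or.inr (Or.inl (case_rC a haC hab.symm))
    · by_cases hby : b = y
      · subst hby
        rw [SimpleGraph.dist_comm]
        exact Or.inl (SimpleGraph.dist_eq_one_iff_adj.mpr (hadjC a haC).1)
      · rw [SimpleGraph.dist_comm]
        exact Or.inr (Or.inr (case_NC b hbN a haC hby hab.symm))
    · exact Or.inr (Or.inl (case_CC a haC b hbC hab))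
  set F : V → ℤ := fun v => (f v : ℤ) with hF
  have hWp : ∀ a ∈ W, ∀ b ∈ W, a ≠ b → (p : ℤ) ≤ |F a - F b| := by
    intro a ha b hb hab
    rcases hWd a ha b hb hab with h1 | h23
    · exact le_trans (by exact_mod_cast hph) (hf1 a b h1)
    · exact hf2 a b h23
  -- memberships in W
  have hrW : r ∈ W := Finset.mem_union_left _ (Finset.mem_insert_self _ _)
  have hNW : ∀ a ∈ N, a ∈ W := fun a ha =>
    Finset.mem_union_left _ (Finset.mem_insert_of_mem ha)
  have hCW : ∀ a ∈ C, a ∈ W := fun a ha => Finset.mem_union_right _ ha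
  have hyW : y ∈ W := hNW y hyN
  -- cardinalities
  have hcardN : N.card = m + 1 := hr
  have hrnotN : r ∉ N := by simp [hN]
  have hcardS : S.card = m + 2 := by
    rw [hS, Finset.card_insert_of_notMem hrnotN, hcardN]
  have hyS : y ∈ S := Finset.mem_insert_of_mem hyN
  set A : Finset V := S.erase y with hAdef
  have hcardA : A.card = m + 1 := by
    rw [hAdef, Finset.card_erase_of_mem hyS, hcardS]
    omega
  have hcardC : C.card = m := by
    have hsub : {r} ⊆ G.neighborFinset y := by
      rw [Finset.singleton_subset_iff]
      exact (G.mem_neighborFinset y r).mpr hadj_ry.symm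
    rw [hC, Finset.card_sdiff_of_subset hsub, SimpleGraph.card_neighborFinset_eq_degree,
      hnbr y hadj_ry]
    simp
  have hAW : ∀ a ∈ A, a ∈ W := by
    intro a ha
    have : a ∈ S := Finset.mem_of_mem_erase ha
    exact Finset.mem_union_left _ this
  -- labels distinct on W
  have hne_labels : ∀ a ∈ W, ∀ b ∈ W, a ≠ b → f a ≠ f b := by
    intro a ha b hb hab heq
    have := hWp a ha b hb hab
    simp only [hF] at this
    simp only [heq] at this
    simp at this
    omega
  -- filters
  set Ab := A.filter (fun w => f w < f y) with hAb
  set Aa := A.filter (fun w => f y < f w) with hAa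
  set Cb := C.filter (fun w => f w < f y) with hCb
  set Ca := C.filter (fun w => f y < f w) with hCa
  have hyA : y ∉ A := Finset.notMem_erase _ _
  have hyC : y ∉ C := by
    intro hyc
    exact G.irrefl (hadjC y hyc).1
  have hsplitA : Ab.card + Aa.card = m + 1 := by
    have hcongr : Aa = A.filter (fun w => ¬ f w < f y) := by
      apply Finset.filter_congr
      intro w hw
      have hne : f w ≠ f y := hne_labels w (hAW w hw) y hyW (by
        intro hwy; exact hyA (hwy ▸ hw))
      constructor
      · intro hlt; omega
      · intro hnlt; omega
    rw [hAb, hcongr, Finset.card_filter_add_card_filter_not, hcardA]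
  have hsplitC : Cb.card + Ca.card = m := by
    have hcongr : Ca = C.filter (fun w => ¬ f w < f y) := by
      apply Finset.filter_congr
      intro w hw
      have hne : f w ≠ f y := hne_labels w (hCW w hw) y hyW (by
        intro hwy; exact hyC (hwy ▸ hw))
      constructor
      · intro hlt; omega
      · intro hnlt; omega
    rw [hCb, hcongr, Finset.card_filter_add_card_filter_not, hcardC]
  have hCnotS : ∀ z ∈ C, z ∉ S := by
    intro z hz hzS
    obtain ⟨hzy, hzr⟩ := hadjC z hz
    rw [hS, Finset.mem_insert] at hzS
    rcases hzS with rfl | hzN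
    · exact hzr rfl
    · exact nadj_of_path2 hA hadj_ry hzy (Ne.symm hzr) (hadjN z hzN)
  have hdisjb : Disjoint Ab Cb := by
    rw [Finset.disjoint_left]
    intro x hx hx'
    exact hCnotS x (Finset.mem_of_mem_filter x hx') (Finset.mem_of_mem_erase (Finset.mem_of_mem_filter x hx))
  have hdisja : Disjoint Aa Ca := by
    rw [Finset.disjoint_left]
    intro x hx hx'
    exact hCnotS x (Finset.mem_of_mem_filter x hx') (Finset.mem_of_mem_erase (Finset.mem_of_mem_filter x hx))
  set T1 : Finset V := insert y (Ab ∪ Cb) with hT1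
  set T2 : Finset V := Aa ∪ Ca with hT2
  have hynotin : y ∉ Ab ∪ Cb := by
    rw [Finset.mem_union]
    rintro (hy1 | hy2)
    · exact hyA (Finset.mem_of_mem_filter y hy1)
    · exact hyC (Finset.mem_of_mem_filter y hy2)
  have hcardT1 : T1.card = Ab.card + Cb.card + 1 := by
    rw [hT1, Finset.card_insert_of_notMem hynotin, Finset.card_union_of_disjoint hdisjb]
  have hcardT2 : T2.card = Aa.card + Ca.card := by
    rw [hT2, Finset.card_union_of_disjoint hdisja]
  have hT1W : ∀ x ∈ T1, x ∈ W := by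
    intro x hx
    rw [hT1, Finset.mem_insert, Finset.mem_union] at hx
    rcases hx with rfl | hx | hx
    · exact hyW
    · exact hAW x (Finset.mem_of_mem_filter x hx)
    · exact hCW x (Finset.mem_of_mem_filter x hx)
  have hT2W : ∀ x ∈ T2, x ∈ W := by
    intro x hx
    rw [hT2, Finset.mem_union] at hx
    rcases hx with hx | hx
    · exact hAW x (Finset.mem_of_mem_filter x hx)
    · exact hCW x (Finset.mem_of_mem_filter x hx)
  have hp' : (0 : ℤ) < (p : ℤ) := by exact_mod_cast hp
  -- Bound 1
  have hB1 : (0 : ℤ) + ((T1.card : ℤ) - 1) * p ≤ F y := by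
    apply pack_v (p : ℤ) hp' F T1 ⟨y, Finset.mem_insert_self _ _⟩
      (fun a ha b hb hab => hWp a (hT1W a ha) b (hT1W b hb) hab)
    intro x hx
    constructor
    · positivity
    · rw [hT1, Finset.mem_insert, Finset.mem_union] at hx
      rcases hx with rfl | hx | hx
      · exact le_refl _
      · have := (Finset.mem_filter.mp hx).2
        simp only [hF]; exact_mod_cast this.le
      · have := (Finset.mem_filter.mp hx).2
        simp only [hF]; exact_mod_cast this.le
  -- r belongs to Aa
  have hrA : r ∈ A := by
    rw [hAdef, Finset.mem_erase]
    exact ⟨fun hry => G.irrefl (hry ▸ hadj_ry), Finset.mem_insert_self _ _⟩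
  have hrT2 : r ∈ T2 := by
    rw [hT2, Finset.mem_union]
    left
    rw [hAa, Finset.mem_filter]
    exact ⟨hrA, hyr⟩
  -- Bound 2
  have hB2 : (F y + h) + ((T2.card : ℤ) - 1) * p ≤ (ℓ : ℤ) := by
    apply pack_v (p : ℤ) hp' F T2 ⟨r, hrT2⟩
      (fun a ha b hb hab => hWp a (hT2W a ha) b (hT2W b hb) hab)
    intro x hx
    have hxf : F x ≤ (ℓ : ℤ) := by simp only [hF]; exact_mod_cast hf0 x
    refine ⟨?_, hxf⟩
    rw [hT2, Finset.mem_union] at hx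
    rcases hx with hx | hx
    · -- x ∈ Aa
      obtain ⟨hxA, hxgt⟩ := Finset.mem_filter.mp hx
      have hxS : x ∈ S := Finset.mem_of_mem_erase hxA
      have hxy : x ≠ y := (Finset.mem_erase.mp hxA).1
      rw [hS, Finset.mem_insert] at hxS
      rcases hxS with rfl | hxN
      · -- x = r
        have hd : G.dist x y = 1 := SimpleGraph.dist_eq_one_iff_adj.mpr hadj_ry
        have := hf1 x y hd
        simp only [hF]
        rw [abs_of_nonneg (by
          have : (f y : ℤ) ≤ (f x : ℤ) := by exact_mod_cast hxgt.le
          linarith)] at this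
        linarith
      · -- x a neighbour of r, x ≠ y, f y < f x
        by_cases hxr : f x < f r
        · exfalso
          have hxB : x ∈ N.filter (fun u => f u < f r) :=
            Finset.mem_filter.mpr ⟨hxN, hxr⟩
          have := hymax x hxB
          omega
        · -- f r ≤ f x, and x ≠ r, so f r < f x
          have hxner : x ≠ r := by
            intro hxeq
            exact hrnotN (hxeq ▸ hxN)
          have hfne : f x ≠ f r := hne_labels x (hNW x hxN) r hrW hxner
          have hgt : f r < f x := by omega
          have hd : G.dist x r = 1 := by
            rw [SimpleGraph.dist_comm]
            exact SimpleGraph.dist_eq_one_iff_adj.mpr (hadjN x hxN)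
          have := hf1 x r hd
          rw [abs_of_nonneg (by
            have : (f r : ℤ) ≤ (f x : ℤ) := by exact_mod_cast hgt.le
            linarith)] at this
          simp only [hF]
          have hry : (f y : ℤ) < (f r : ℤ) := by exact_mod_cast hyr
          push_cast at this ⊢
          linarith
    · -- x ∈ Ca : child of y above
      obtain ⟨hxC, hxgt⟩ := Finset.mem_filter.mp hx
      have hd : G.dist y x = 1 := SimpleGraph.dist_eq_one_iff_adj.mpr (hadjC x hxC).1
      have := hf1 y x hd
      rw [abs_of_nonpos (by
        have : (f y : ℤ) ≤ (f x : ℤ) := by exact_mod_cast hxgt.le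
        linarith)] at this
      simp only [hF]
      push_cast at this ⊢
      linarith
  -- combine
  have hsum : (T1.card : ℤ) - 1 + ((T2.card : ℤ) - 1) = 2 * m := by
    have : T1.card + T2.card = 2 * m + 2 := by
      rw [hcardT1, hcardT2]
      omega
    push_cast [this]
    push_cast at this
    linarith
  have hgoal : (h : ℤ) + 2 * m * p ≤ (ℓ : ℤ) := by
    have hd1 : ((T1.card : ℤ) - 1) * p + ((T2.card : ℤ) - 1) * p = 2 * m * p := by
      rw [← add_mul, hsum]
    linarith
  exact_mod_cast hgoal

end Stmt4Aux
namespace Stmt4Aux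

lemma flip {V : Type} {G : SimpleGraph V} {h p ℓ : ℕ} {f : V → ℕ}
    (hf : IsLLabelling G h p ℓ f) : IsLLabelling G h p ℓ (fun v => ℓ - f v) := by
  obtain ⟨h0, h1, h2⟩ := hf
  refine ⟨fun v => Nat.sub_le _ _, fun u v hd => ?_, fun u v hd => ?_⟩
  · have hle := h1 u v hd
    have hu := h0 u; have hv := h0 v
    have e : ((ℓ - f u : ℕ) : ℤ) - ((ℓ - f v : ℕ) : ℤ) = -((f u : ℤ) - (f v : ℤ)) := by
      omega
    show (h : ℤ) ≤ |((ℓ - f u : ℕ) : ℤ) - ((ℓ - f v : ℕ) : ℤ)|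
    rw [e, abs_neg]; exact hle
  · have hle := h2 u v hd
    have hu := h0 u; have hv := h0 v
    have e : ((ℓ - f u : ℕ) : ℤ) - ((ℓ - f v : ℕ) : ℤ) = -((f u : ℤ) - (f v : ℤ)) := by
      omega
    show (p : ℤ) ≤ |((ℓ - f u : ℕ) : ℤ) - ((ℓ - f v : ℕ) : ℤ)|
    rw [e, abs_neg]; exact hle

lemma inj_label (h q : ℕ) (hq : q ≤ h) (a b : ℕ) (hab : a ≠ b) :
    (q : ℤ) ≤ |((h * a : ℕ) : ℤ) - ((h * b : ℕ) : ℤ)| := by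
  have e : ((h * a : ℕ) : ℤ) - ((h * b : ℕ) : ℤ) = (h : ℤ) * ((a : ℤ) - (b : ℤ)) := by
    push_cast; ring
  rw [e, abs_mul, abs_of_nonneg (by positivity : (0:ℤ) ≤ (h:ℤ))]
  have hne : (a : ℤ) - (b : ℤ) ≠ 0 := sub_ne_zero.mpr (by exact_mod_cast hab)
  have h1 : (1 : ℤ) ≤ |(a : ℤ) - (b : ℤ)| := Int.one_le_abs hne
  calc (q : ℤ) ≤ (h : ℤ) := by exact_mod_cast hq
    _ = (h : ℤ) * 1 := by ring
    _ ≤ (h : ℤ) * |(a : ℤ) - (b : ℤ)| := by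
        apply mul_le_mul_of_nonneg_left h1 (by positivity)

lemma exists_labelling {V : Type} [Fintype V] (G : SimpleGraph V) (h p : ℕ) (hph : p ≤ h) :
    ∃ ℓ : ℕ, ∃ f : V → ℕ, IsLLabelling G h p ℓ f := by
  classical
  let e := Fintype.equivFin V
  refine ⟨h * Fintype.card V, fun v => h * ((e v : Fin (Fintype.card V)) : ℕ), ?_, ?_, ?_⟩
  · intro v
    exact Nat.mul_le_mul_left _ (le_of_lt (e v).isLt)
  · intro u v hd
    have huv : u ≠ v := by
      intro he; rw [he, SimpleGraph.dist_self] at hd; omega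
    exact inj_label h h le_rfl _ _
      (fun hh => huv (e.injective (Fin.ext hh)))
  · intro u v hd
    have huv : u ≠ v := by
      intro he; rw [he, SimpleGraph.dist_self] at hd
      rcases hd with hd | hd <;> omega
    exact inj_label h p hph _ _
      (fun hh => huv (e.injective (Fin.ext hh)))

end Stmt4Aux

theorem stmt4 {V : Type} [Fintype V] (G : SimpleGraph V) [DecidableRel G.Adj]
    (hT : G.IsTree) (m : ℕ) (hm : 2 ≤ m) (r : V)
    (hr : G.degree r = m + 1)
    (hnbr : ∀ v : V, G.Adj r v → G.degree v = m + 1)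
    (hball : ∀ v : V, G.dist r v ≤ 2)
    (h p : ℕ) (hp : 1 ≤ p) (hph : p ≤ h) :
    h + 2 * m * p ≤ lambdaNum G h p := by
  classical
  have hset_ne : {ℓ : ℕ | ∃ f : V → ℕ, IsLLabelling G h p ℓ f}.Nonempty := by
    obtain ⟨ℓ0, f0, hf0⟩ := Stmt4Aux.exists_labelling G h p hph
    exact ⟨ℓ0, f0, hf0⟩
  apply le_csInf hset_ne
  rintro ℓ ⟨f, hf⟩
  have hNne : (G.neighborFinset r).Nonempty := by
    apply Finset.card_pos.mp
    rw [SimpleGraph.card_neighborFinset_eq_degree, hr]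
    omega
  obtain ⟨u, hu⟩ := hNne
  have hadj : G.Adj r u := (G.mem_neighborFinset r u).mp hu
  by_cases hex : ∃ w, G.Adj r w ∧ f w < f r
  · exact Stmt4Aux.main G hT m r hr hnbr h p ℓ hp hph f hf hex
  · have hf' : IsLLabelling G h p ℓ (fun v => ℓ - f v) := Stmt4Aux.flip hf
    have hfu : f r < f u := by
      push_neg at hex
      have h1 := hex u hadj
      have hne : f u ≠ f r := by
        have hd : G.dist r u = 1 := SimpleGraph.dist_eq_one_iff_adj.mpr hadj
        have h2 := hf.2.1 r u hd
        intro he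
        rw [he] at h2
        simp at h2
        omega
      omega
    have hex' : ∃ w, G.Adj r w ∧ (fun v => ℓ - f v) w < (fun v => ℓ - f v) r := by
      refine ⟨u, hadj, ?_⟩
      have h1 := hf.1 u
      have h2 := hf.1 r
      simp only
      omega
    exact Stmt4Aux.main G hT m r hr hnbr h p ℓ hp hph _ hf' hex'
end

section
/- Let h ≥ p ≥ 1 and m, k ≥ 2 be integers. Then λ_{h,p,p}(T̂_{m,k}) = λ*_{h,p,p}(T̂_{m,k}) = h + 2mp. -/
open SimpleGraph

set_option linter.unusedSectionVars false
set_option linter.unusedVariables false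

namespace Stmt6Aux
variable {V : Type} [DecidableEq V] {G : SimpleGraph V}


variable {V : Type} [DecidableEq V] {G : SimpleGraph V}

lemma adj_dist (hT : G.IsTree) (r : V) {u v : V} (huv : G.Adj u v) :
    G.dist r u + 1 = G.dist r v ∨ G.dist r v + 1 = G.dist r u := by
  obtain ⟨P, hP, hPl⟩ := hT.isConnected.exists_path_of_dist r u
  obtain ⟨Q, hQ, hQl⟩ := hT.isConnected.exists_path_of_dist r v
  have h1 : G.dist r v ≤ G.dist r u + 1 := by
    have := SimpleGraph.dist_le (P.concat huv)
    rwa [Walk.length_concat, hPl] at this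
  have h2 : G.dist r u ≤ G.dist r v + 1 := by
    have := SimpleGraph.dist_le (Q.concat huv.symm)
    rwa [Walk.length_concat, hQl] at this
  have hne : G.dist r u ≠ G.dist r v := by
    intro heq
    have hv : v ∉ P.support := by
      intro hv
      have ht := SimpleGraph.dist_le (P.takeUntil v hv)
      have hsplit : (P.takeUntil v hv).length + (P.dropUntil v hv).length = P.length := by
        conv_rhs => rw [← Walk.take_spec P hv]
        rw [Walk.length_append]
      have hdrop0 : (P.dropUntil v hv).length = 0 := by omega
      have : v = u := Walk.eq_of_length_eq_zero hdrop0
      subst this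
      exact G.irrefl huv
    have hP' : (P.concat huv).IsPath := by
      rw [← Walk.isPath_reverse_iff, Walk.reverse_concat, Walk.cons_isPath_iff]
      refine ⟨(Walk.isPath_reverse_iff P).mpr hP, ?_⟩
      rwa [Walk.support_reverse, List.mem_reverse]
    have := (hT.existsUnique_path r v).unique hP' hQ
    have hl : (P.concat huv).length = Q.length := by rw [this]
    rw [Walk.length_concat, hPl, hQl] at hl
    omega
  omega

lemma walk_parity (hT : G.IsTree) (r : V) : ∀ {u v : V} (W : G.Walk u v),
    (G.dist r u + W.length) % 2 = G.dist r v % 2 := by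
  intro u v W
  induction W with
  | nil => simp
  | @cons a b c hab W ih =>
    have := adj_dist hT r hab
    rw [Walk.length_cons]
    omega

lemma dist_parity (hT : G.IsTree) (r u v : V) :
    (G.dist r u + G.dist u v) % 2 = G.dist r v % 2 := by
  obtain ⟨W, hW⟩ := hT.isConnected.exists_walk_length_eq_dist u v
  have := walk_parity hT r W
  rwa [hW] at this

lemma parent_unique (hT : G.IsTree) (r : V) {v w w' : V} (h1 : G.Adj v w) (h2 : G.Adj v w')
    (hd : G.dist r w + 1 = G.dist r v) (hd' : G.dist r w' + 1 = G.dist r v) : w = w' := by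
  have key : ∀ {w : V} (h : G.Adj v w), G.dist r w + 1 = G.dist r v →
      ∃ (R : G.Walk v r), R.IsPath ∧ R.getVert 1 = w ∧ R.length = G.dist r v := by
    intro w h hdw
    obtain ⟨P, hP, hPl⟩ := hT.isConnected.exists_path_of_dist r w
    have hv : v ∉ P.support := by
      intro hv
      have ht := SimpleGraph.dist_le (P.takeUntil v hv)
      have := Walk.length_takeUntil_le P hv
      omega
    refine ⟨Walk.cons h P.reverse, ?_, ?_, ?_⟩
    · rw [Walk.cons_isPath_iff]
      refine ⟨(Walk.isPath_reverse_iff P).mpr hP, ?_⟩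
      rwa [Walk.support_reverse, List.mem_reverse]
    · rw [Walk.getVert_cons_succ, Walk.getVert_zero]
    · rw [Walk.length_cons, Walk.length_reverse, hPl]; omega
  obtain ⟨R, hR, hR1, _⟩ := key h1 hd
  obtain ⟨R', hR', hR1', _⟩ := key h2 hd'
  have : R = R' := (hT.existsUnique_path v r).unique hR hR'
  rw [← hR1, ← hR1', this]

lemma exists_parent (hT : G.IsTree) (r : V) {v : V} (hv : G.dist r v ≠ 0) :
    ∃ w, G.Adj v w ∧ G.dist r w + 1 = G.dist r v := by
  obtain ⟨P, hP, hPl⟩ := hT.isConnected.exists_path_of_dist v r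
  rw [SimpleGraph.dist_comm] at hPl
  have hnil : ¬ P.Nil := by rw [Walk.nil_iff_length_eq]; omega
  obtain ⟨w, hadj, q, rfl⟩ := Walk.not_nil_iff.mp hnil
  refine ⟨w, hadj, ?_⟩
  have hle : G.dist r w ≤ G.dist r v - 1 := by
    have := SimpleGraph.dist_le q.reverse
    rw [Walk.length_reverse] at this
    rw [Walk.length_cons] at hPl
    omega
  have := adj_dist hT r hadj
  omega

lemma dist2_mid (hT : G.IsTree) {u v : V} (h : G.dist u v = 2) :
    ∃ w, G.Adj u w ∧ G.Adj w v := by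
  obtain ⟨W, hW⟩ := hT.isConnected.exists_walk_length_eq_dist u v
  rw [h] at hW
  refine ⟨W.getVert 1, ?_, ?_⟩
  · have := W.adj_getVert_succ (i := 0) (by omega)
    rwa [Walk.getVert_zero] at this
  · have := W.adj_getVert_succ (i := 1) (by omega)
    rw [show (1:ℕ) + 1 = W.length by omega, Walk.getVert_length] at this
    exact this




lemma degree_le [Fintype V] [DecidableRel G.Adj] (hT : G.IsTree) (r : V) {m k : ℕ}
    (hdeg : ∀ v : V, G.dist r v < k → G.degree v = m + 1)
    (hball : ∀ v : V, G.dist r v ≤ k) (w : V) : G.degree w ≤ m + 1 := by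
  rcases lt_or_eq_of_le (hball w) with hlt | heq
  · rw [hdeg w hlt]
  · have : (G.neighborFinset w).card ≤ 1 := by
      apply Finset.card_le_one.mpr
      intro a ha b hb
      rw [mem_neighborFinset] at ha hb
      have hda := adj_dist hT r ha.symm
      have hdb := adj_dist hT r hb.symm
      have h1 : G.dist r a + 1 = G.dist r w := by have := hball a; omega
      have h2 : G.dist r b + 1 = G.dist r w := by have := hball b; omega
      exact parent_unique hT r ha hb h1 h2
    rw [← card_neighborFinset_eq_degree]
    omega

noncomputable def slotF {V : Type} {m : ℕ} (par : V → V) (psi : V → V → ZMod (m+1))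
    (dep : V → ℕ) (r : V) (v : V) : ZMod (m+1) :=
  (if dep v % 2 = 1 then psi r (par^[dep v - 1] v) else 0) +
  ∑ i ∈ Finset.range (dep v / 2),
    (psi (par (par^[2*i] v)) (par^[2*i] v) - psi (par (par^[2*i] v)) (par (par (par^[2*i] v))))

lemma slotF_zero {V : Type} {m : ℕ} (par : V → V) (psi : V → V → ZMod (m+1))
    (dep : V → ℕ) (r v : V) (h0 : dep v = 0) : slotF par psi dep r v = 0 := by
  unfold slotF; rw [h0]; simp

lemma slotF_one {V : Type} {m : ℕ} (par : V → V) (psi : V → V → ZMod (m+1))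
    (dep : V → ℕ) (r v : V) (h1 : dep v = 1) : slotF par psi dep r v = psi r v := by
  unfold slotF; rw [h1]; simp

lemma slotF_rec {V : Type} {m : ℕ} (par : V → V) (psi : V → V → ZMod (m+1))
    (dep : V → ℕ) (r v : V) (h2 : 2 ≤ dep v) (hg : dep (par (par v)) = dep v - 2) :
    slotF par psi dep r v =
      slotF par psi dep r (par (par v)) + (psi (par v) v - psi (par v) (par (par v))) := by
  unfold slotF
  rw [hg]
  have hit2 : par^[2] v = par (par v) := by
    rw [Function.iterate_succ_apply', Function.iterate_one]
  have hsum : ∀ i : ℕ, par^[2*(i+1)] v = par^[2*i] (par (par v)) := by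
    intro i
    rw [show 2*(i+1) = 2*i + 2 by ring, Function.iterate_add_apply, hit2]
  have hdiv : dep v / 2 = (dep v - 2)/2 + 1 := by omega
  have hmod : (dep v - 2) % 2 = dep v % 2 := by omega
  rw [hdiv, hmod, Finset.sum_range_succ']
  have hterm : ∀ i ∈ Finset.range ((dep v - 2)/2),
      (psi (par (par^[2*(i+1)] v)) (par^[2*(i+1)] v)
        - psi (par (par^[2*(i+1)] v)) (par (par (par^[2*(i+1)] v)))) =
      (psi (par (par^[2*i] (par (par v)))) (par^[2*i] (par (par v)))
        - psi (par (par^[2*i] (par (par v)))) (par (par (par^[2*i] (par (par v)))))) := by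
    intro i _
    rw [hsum]
  rw [Finset.sum_congr rfl hterm]
  simp only [Nat.mul_zero, Function.iterate_zero, id_eq]
  by_cases hodd : dep v % 2 = 1
  · rw [if_pos hodd, if_pos hodd]
    rw [show dep v - 1 = (dep v - 2 - 1) + 2 by omega, Function.iterate_add_apply, hit2]
    abel
  · rw [if_neg hodd, if_neg hodd]
    abel

lemma chain_lemma {p : ℕ} (hp : 1 ≤ p) : ∀ (n : ℕ) (A : Finset ℕ), A.card = n → A.Nonempty →
    (∀ s ∈ A, ∀ t ∈ A, s ≠ t → s + p ≤ t ∨ t + p ≤ s) →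
    ∀ lo hi : ℕ, (∀ s ∈ A, lo ≤ s ∧ s ≤ hi) → lo + (n - 1) * p ≤ hi := by
  intro n
  induction n with
  | zero =>
    intro A hcard hne
    rw [Finset.card_eq_zero] at hcard
    subst hcard
    exact absurd hne (by simp)
  | succ n ih =>
    intro A hcard hne hsep lo hi hbd
    rcases Nat.eq_zero_or_pos n with rfl | hn
    · obtain ⟨a, ha⟩ := hne
      have := hbd a ha
      simpa using by omega
    · set M := A.max' hne with hMdef
      have hM : M ∈ A := A.max'_mem hne
      set B := A.erase M with hBdef
      have hBcard : B.card = n := by rw [hBdef, Finset.card_erase_of_mem hM, hcard]; omega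
      have hBne : B.Nonempty := Finset.card_pos.mp (by omega)
      have hBsub : ∀ s ∈ B, s ∈ A := fun s hs => Finset.mem_of_mem_erase hs
      have hBlt : ∀ s ∈ B, s + p ≤ M := by
        intro s hs
        have hsA := hBsub s hs
        have hne' : s ≠ M := Finset.ne_of_mem_erase hs
        have hle : s ≤ M := A.le_max' s hsA
        rcases hsep s hsA M hM hne' with h | h <;> omega
      have hrec := ih B hBcard hBne
        (fun s hs t ht hst => hsep s (hBsub s hs) t (hBsub t ht) hst) lo (M - p)
        (fun s hs => ⟨(hbd s (hBsub s hs)).1, by have := hBlt s hs; omega⟩)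
      have hMhi : M ≤ hi := (hbd M hM).2
      obtain ⟨s₀, hs₀⟩ := hBne
      have hpM : p ≤ M := by have := hBlt s₀ hs₀; omega
      have hexp : (n + 1 - 1) * p = (n - 1) * p + p := by
        rw [Nat.succ_sub_one]
        conv_lhs => rw [show n = (n-1)+1 by omega]
        rw [add_mul, one_mul]
      omega




lemma abs_helper {a b M hh : ℕ} (ha : a ≤ M) (hb : b ≤ M) :
    (hh:ℤ) ≤ |((a + (hh + M) : ℕ) : ℤ) - ((b : ℕ) : ℤ)| := by
  have h1 : ((a + (hh + M) : ℕ) : ℤ) = (a:ℤ) + (hh:ℤ) + (M:ℤ) := by push_cast; ring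
  rw [h1, abs_of_nonneg (by omega)]
  omega

lemma upper [Fintype V] [DecidableRel G.Adj] (hT : G.IsTree) {m k : ℕ} (r : V)
    (hm : 2 ≤ m) (hk : 2 ≤ k)
    (hdeg : ∀ v : V, G.dist r v < k → G.degree v = m + 1)
    (hball : ∀ v : V, G.dist r v ≤ k)
    (h p : ℕ) (hp : 1 ≤ p) (hph : p ≤ h) :
    ∃ f : V → ℕ, IsElegantLLabelling G h p (h + 2*m*p) f := by
  haveI : NeZero (m+1) := ⟨Nat.succ_ne_zero m⟩
  -- injections psi
  have hpsiex : ∀ w : V, ∃ g : V → ZMod (m+1),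
      ∀ u, G.Adj w u → ∀ u', G.Adj w u' → g u = g u' → u = u' := by
    intro w
    have hcard : Fintype.card (G.neighborSet w) ≤ Fintype.card (ZMod (m+1)) := by
      rw [ZMod.card, G.card_neighborSet_eq_degree]
      exact degree_le hT r hdeg hball w
    obtain ⟨e⟩ := Function.Embedding.nonempty_of_card_le hcard
    refine ⟨fun u => if hu : u ∈ G.neighborSet w then e ⟨u, hu⟩ else 0, ?_⟩
    intro u hu u' hu' heq
    dsimp only at heq
    rw [dif_pos ((G.mem_neighborSet w u).mpr hu),
      dif_pos ((G.mem_neighborSet w u').mpr hu')] at heq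
    exact Subtype.ext_iff.mp (e.injective heq)
  choose psi hpsi using hpsiex
  -- parent
  have hparex : ∀ v : V, ∃ w : V, G.dist r v ≠ 0 → (G.Adj v w ∧ G.dist r w + 1 = G.dist r v) := by
    intro v
    by_cases hv : G.dist r v = 0
    · exact ⟨r, fun hc => (hc hv).elim⟩
    · obtain ⟨w, hw⟩ := exists_parent hT r hv
      exact ⟨w, fun _ => hw⟩
  choose par hpar using hparex
  set dep : V → ℕ := fun v => G.dist r v with hdepdef
  have adjdep : ∀ {a b : V}, G.Adj a b → dep a + 1 = dep b ∨ dep b + 1 = dep a :=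
    fun hab => adj_dist hT r hab
  have dpar : ∀ u v : V, (dep u + G.dist u v) % 2 = dep v % 2 :=
    fun u v => dist_parity hT r u v
  have hdep0 : ∀ v, dep v = 0 → v = r := by
    intro v hv
    have : G.dist r v = 0 := hv
    rcases SimpleGraph.dist_eq_zero_iff_eq_or_not_reachable.mp this with h' | h'
    · exact h'.symm
    · exact absurd (hT.isConnected r v) h'
  have hparD : ∀ v : V, dep v ≠ 0 → G.Adj v (par v) ∧ dep (par v) + 1 = dep v := hpar
  have hpar' : ∀ v, 1 ≤ dep v → G.Adj v (par v) ∧ dep (par v) + 1 = dep v := by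
    intro v hv
    exact hparD v (by omega)
  have par_eq : ∀ v w, G.Adj v w → dep w + 1 = dep v → par v = w := by
    intro v w hadj hd
    have h1 := hpar' v (by omega)
    exact parent_unique hT r h1.1 hadj h1.2 hd
  set slot : V → ZMod (m+1) := slotF par psi dep r with hslotdef
  -- sibling/parent injectivity
  have sib : ∀ w u u', G.Adj w u → G.Adj w u' → dep u = dep w + 1 → dep u' = dep w + 1 →
      slot u = slot u' → u = u' := by
    intro w u u' hu hu' hdu hdu' hs
    rcases Nat.eq_zero_or_pos (dep w) with hw0 | hw1
    · have hwr : w = r := hdep0 w hw0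
      rw [hslotdef, slotF_one par psi dep r u (by omega),
        slotF_one par psi dep r u' (by omega)] at hs
      exact hpsi r u (hwr ▸ hu) u' (hwr ▸ hu') hs
    · have hpu : par u = w := par_eq u w hu.symm (by omega)
      have hpu' : par u' = w := par_eq u' w hu'.symm (by omega)
      have hgw := hpar' w hw1
      have hgu : dep (par (par u)) = dep u - 2 := by rw [hpu]; omega
      have hgu' : dep (par (par u')) = dep u' - 2 := by rw [hpu']; omega
      rw [hslotdef, slotF_rec par psi dep r u (by omega) hgu,
        slotF_rec par psi dep r u' (by omega) hgu'] at hs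
      rw [hpu, hpu'] at hs
      have hdd : dep u - 2 = dep u' - 2 := by omega
      have : psi w u = psi w u' := by linear_combination hs
      exact hpsi w u hu u' hu' this
  have nochild_par : ∀ w u, G.Adj w u → dep u = dep w + 1 → 1 ≤ dep w →
      slot u ≠ slot (par w) := by
    intro w u hu hdu hw1 hs
    have hgw := hpar' w hw1
    have hpu : par u = w := par_eq u w hu.symm (by omega)
    have hgu : dep (par (par u)) = dep u - 2 := by rw [hpu]; omega
    rw [hslotdef, slotF_rec par psi dep r u (by omega) hgu, hpu] at hs
    have hpsieq : psi w u = psi w (par w) := by linear_combination hs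
    have : u = par w := hpsi w u hu (par w) hgw.1 hpsieq
    have : dep u = dep (par w) := by rw [this]
    omega
  -- key distance-2 injectivity
  have dist2_slot : ∀ u v, G.dist u v = 2 → slot u ≠ slot v := by
    intro u v hduv hs
    have hne : u ≠ v := by
      intro he
      rw [he, SimpleGraph.dist_self] at hduv
      exact absurd hduv (by omega)
    obtain ⟨w, hw1, hw2⟩ := dist2_mid hT hduv
    have hcu := adjdep hw1
    have hcv := adjdep hw2
    rcases hcu with hu | hu <;> rcases hcv with hv | hv
    · -- u parent of w, v child of w
      have h1 : par w = u := par_eq w u hw1.symm (by omega)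
      exact nochild_par w v hw2 (by omega) (by omega) (by rw [h1, ← hs])
    · -- dep u = dep w - 1, dep v = dep w - 1 : both parents of w
      have h1 : par w = u := par_eq w u hw1.symm (by omega)
      have h2 : par w = v := par_eq w v hw2 (by omega)
      exact hne (h1 ▸ h2)
    · -- both children
      exact hne (sib w u v hw1.symm hw2 (by omega) (by omega) hs)
    · -- v parent, u child
      have h1 : par w = v := par_eq w v hw2 (by omega)
      exact nochild_par w u hw1.symm (by omega) (by omega) (by rw [h1, hs])
  -- the labelling
  set M := m * p with hM
  have h2mp : 2 * m * p = M + M := by rw [hM]; ring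
  set f : V → ℕ := fun v => (slot v).val * p + (if dep v % 2 = 1 then h + M else 0) with hf
  have hvalle : ∀ v, (slot v).val * p ≤ M := by
    intro v
    rw [hM]
    exact Nat.mul_le_mul_right p (by have := ZMod.val_lt (slot v); omega)
  have hfodd : ∀ v, dep v % 2 = 1 → f v = (slot v).val * p + (h + M) := by
    intro v hv
    show (slot v).val * p + (if dep v % 2 = 1 then h + M else 0) = _
    rw [if_pos hv]
  have hfeven : ∀ v, dep v % 2 ≠ 1 → f v = (slot v).val * p := by
    intro v hv
    show (slot v).val * p + (if dep v % 2 = 1 then h + M else 0) = _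
    rw [if_neg hv, Nat.add_zero]
  have oppo : ∀ u v, dep u % 2 = 1 → dep v % 2 ≠ 1 → (h:ℤ) ≤ |(f u : ℤ) - (f v : ℤ)| := by
    intro u v hu hv
    rw [hfodd u hu, hfeven v hv]
    exact abs_helper (hvalle u) (hvalle v)
  have oppo' : ∀ u v, dep u % 2 ≠ dep v % 2 → (h:ℤ) ≤ |(f u : ℤ) - (f v : ℤ)| := by
    intro u v hne
    rcases Nat.mod_two_eq_zero_or_one (dep u) with h0 | h1
    · rw [abs_sub_comm]
      exact oppo v u (by omega) (by omega)
    · exact oppo u v h1 (by omega)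
  have same : ∀ u v, dep u % 2 = dep v % 2 → slot u ≠ slot v → (p:ℤ) ≤ |(f u : ℤ) - (f v : ℤ)| := by
    intro u v hpar hslot
    have hvalne : (slot u).val ≠ (slot v).val := fun he => hslot (ZMod.val_injective (m+1) he)
    have key : ∀ a b : ℕ, a ≠ b → (p:ℤ) ≤ |(a * p : ℤ) - (b * p : ℤ)| := by
      intro a b hab
      rcases Nat.lt_or_ge a b with hlt | hge
      · have : (a+1) * p ≤ b * p := Nat.mul_le_mul_right p (by omega)
        rw [abs_sub_comm, abs_of_nonneg (by push_cast; nlinarith)]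
        push_cast at this ⊢
        nlinarith
      · have hlt : b < a := by omega
        have : (b+1) * p ≤ a * p := Nat.mul_le_mul_right p (by omega)
        rw [abs_of_nonneg (by push_cast at this ⊢; nlinarith)]
        push_cast at this ⊢
        nlinarith
    have hfu : (f u : ℤ) - (f v : ℤ) = ((slot u).val * p : ℤ) - ((slot v).val * p : ℤ) := by
      rcases Nat.mod_two_eq_zero_or_one (dep u) with h0 | h1
      · rw [hfeven u (by omega), hfeven v (by omega)]; push_cast; ring
      · rw [hfodd u h1, hfodd v (by omega)]; push_cast; ring
    rw [hfu]
    exact key _ _ hvalne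
  have hL : IsLLabelling G h p (h + 2*m*p) f := by
    refine ⟨?_, ?_, ?_⟩
    · intro v
      have h1 := hvalle v
      have hfle : f v ≤ M + (h + M) := by
        show (slot v).val * p + (if dep v % 2 = 1 then h + M else 0) ≤ _
        split <;> omega
      omega
    · intro u v hd
      have hadj : G.Adj u v := SimpleGraph.dist_eq_one_iff_adj.mp hd
      have := adjdep hadj
      exact oppo' u v (by omega)
    · intro u v hd
      rcases hd with hd | hd
      · -- distance 2
        have hpar2 := dpar u v
        rw [hd] at hpar2
        exact same u v (by omega) (dist2_slot u v hd)
      · have hpar2 := dpar u v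
        rw [hd] at hpar2
        have := oppo' u v (by omega)
        have hph' : (p:ℤ) ≤ (h:ℤ) := by exact_mod_cast hph
        omega
  -- elegance
  refine ⟨f, hL, ?_⟩
  set n := h + 2*m*p + 1 with hn
  set IA : Set (ZMod n) := {x : ZMod n | ∃ i : ℕ, i ≤ M ∧ x = (0 : ZMod n) + (i : ZMod n)} with hIA
  set IB : Set (ZMod n) := {x : ZMod n | ∃ i : ℕ, i ≤ M ∧ x = ((h + M : ℕ) : ZMod n) + (i : ZMod n)} with hIB
  refine ⟨fun u => if dep u % 2 = 1 then IA else IB, ?_, ?_, ?_⟩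
  · intro u
    dsimp only
    by_cases hu : dep u % 2 = 1
    · rw [if_pos hu]; exact ⟨0, M, rfl⟩
    · rw [if_neg hu]; exact ⟨((h + M : ℕ) : ZMod n), M, rfl⟩
  · intro u w hadj
    have hne := adjdep hadj
    dsimp only
    by_cases hu : dep u % 2 = 1
    · rw [if_pos hu]
      have hw : dep w % 2 ≠ 1 := by omega
      rw [hfeven w hw]
      exact ⟨(slot w).val * p, hvalle w, by rw [zero_add]⟩
    · rw [if_neg hu]
      have hw : dep w % 2 = 1 := by omega
      rw [hfodd w hw]
      refine ⟨(slot w).val * p, hvalle w, ?_⟩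
      push_cast
      ring
  · intro u v hadj
    have hABdisj : IA ∩ IB = ∅ := by
      rw [Set.eq_empty_iff_forall_notMem]
      rintro x ⟨⟨i₁, hi₁, hx₁⟩, ⟨i₂, hi₂, hx₂⟩⟩
      rw [hx₂, zero_add] at hx₁
      have hn2 : n = h + M + M + 1 := by rw [hn, h2mp]; ring
      have hcc : ((i₁ : ℕ) : ZMod n) = ((h + M + i₂ : ℕ) : ZMod n) := by
        rw [← hx₁]; push_cast; ring
      have hmodeq := (ZMod.natCast_eq_natCast_iff _ _ _).mp hcc
      unfold Nat.ModEq at hmodeq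
      rw [Nat.mod_eq_of_lt (by omega), Nat.mod_eq_of_lt (by omega)] at hmodeq
      omega
    have hne := adjdep hadj
    dsimp only
    by_cases hu : dep u % 2 = 1
    · have hv : ¬ (dep v % 2 = 1) := by omega
      rw [if_pos hu, if_neg hv]
      exact hABdisj
    · have hv : dep v % 2 = 1 := by omega
      rw [if_neg hu, if_pos hv]
      rw [Set.inter_comm]
      exact hABdisj


lemma lower_key [Fintype V] [DecidableRel G.Adj] (hT : G.IsTree) (r : V) {m k : ℕ}
    (hm : 2 ≤ m) (hk : 2 ≤ k)
    (hdeg : ∀ v : V, G.dist r v < k → G.degree v = m + 1)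
    (hball : ∀ v : V, G.dist r v ≤ k)
    {h p : ℕ} (hp : 1 ≤ p) (hph : p ≤ h) {ℓ : ℕ} {f : V → ℕ}
    (hf : IsLLabelling G h p ℓ f) (c : V) (hc : G.Adj r c) (hlt : f r < f c)
    (hmin : ∀ v, G.Adj r v → ((f c : ℤ) - (f r : ℤ)) ≤ |(f v : ℤ) - (f r : ℤ)|) :
    h + 2*m*p ≤ ℓ := by
  have adjdep : ∀ {a b : V}, G.Adj a b →
      G.dist r a + 1 = G.dist r b ∨ G.dist r b + 1 = G.dist r a := fun hab => adj_dist hT r hab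
  have dpar : ∀ u v : V, (G.dist r u + G.dist u v) % 2 = G.dist r v % 2 := dist_parity hT r
  have hd00 : ∀ a b : V, G.dist a b = 0 → a = b := by
    intro a b hab
    rcases SimpleGraph.dist_eq_zero_iff_eq_or_not_reachable.mp hab with h' | h'
    · exact h'
    · exact absurd (hT.isConnected a b) h'
  have hdrc : G.dist r c = 1 := SimpleGraph.dist_eq_one_iff_adj.mpr hc
  have hdegr : G.degree r = m + 1 := hdeg r (by rw [SimpleGraph.dist_self]; omega)
  have hdegc : G.degree c = m + 1 := hdeg c (by rw [hdrc]; omega)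
  set OC := (G.neighborFinset r).erase c with hOC
  set GC := (G.neighborFinset c).erase r with hGC
  have hOCcard : OC.card = m := by
    rw [hOC, Finset.card_erase_of_mem ((G.mem_neighborFinset r c).mpr hc),
      card_neighborFinset_eq_degree, hdegr]
    omega
  have hGCcard : GC.card = m := by
    rw [hGC, Finset.card_erase_of_mem ((G.mem_neighborFinset c r).mpr hc.symm),
      card_neighborFinset_eq_degree, hdegc]
    omega
  have hOCfacts : ∀ u ∈ OC, G.Adj r u ∧ u ≠ c ∧ G.dist r u = 1 := by
    intro u hu
    rw [hOC, Finset.mem_erase, G.mem_neighborFinset] at hu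
    exact ⟨hu.2, hu.1, SimpleGraph.dist_eq_one_iff_adj.mpr hu.2⟩
  have hGCfacts : ∀ z ∈ GC, G.Adj c z ∧ z ≠ r ∧ G.dist r z = 2 := by
    intro z hz
    rw [hGC, Finset.mem_erase, G.mem_neighborFinset] at hz
    refine ⟨hz.2, hz.1, ?_⟩
    have := adjdep hz.2
    have hz0 : G.dist r z ≠ 0 := fun h0 => hz.1 (hd00 r z h0).symm
    omega
  have hdisj : Disjoint OC GC := by
    rw [Finset.disjoint_left]
    intro z hzo hzg
    have h1 := (hOCfacts z hzo).2.2
    have h2 := (hGCfacts z hzg).2.2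
    omega
  have hdcu : ∀ u ∈ OC, G.dist c u = 2 := by
    intro u hu
    obtain ⟨hadj, hne, hd1⟩ := hOCfacts u hu
    have hle : G.dist c u ≤ 2 := by
      have := SimpleGraph.dist_le (Walk.cons hc.symm (Walk.cons hadj Walk.nil))
      simpa using this
    have hparity := dpar c u
    rw [hdrc, hd1] at hparity
    have hne0 : G.dist c u ≠ 0 := fun h0 => hne (hd00 c u h0).symm
    omega
  have hdzz : ∀ z ∈ GC, ∀ z' ∈ GC, z ≠ z' → G.dist z z' = 2 := by
    intro z hz z' hz' hne
    obtain ⟨hadj, _, hd2⟩ := hGCfacts z hz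
    obtain ⟨hadj', _, hd2'⟩ := hGCfacts z' hz'
    have hle : G.dist z z' ≤ 2 := by
      have := SimpleGraph.dist_le (Walk.cons hadj.symm (Walk.cons hadj' Walk.nil))
      simpa using this
    have hparity := dpar z z'
    rw [hd2, hd2'] at hparity
    have hne0 : G.dist z z' ≠ 0 := fun h0 => hne (hd00 z z' h0)
    omega
  have hduu : ∀ u ∈ OC, ∀ u' ∈ OC, u ≠ u' → G.dist u u' = 2 := by
    intro u hu u' hu' hne
    obtain ⟨hadj, _, hd1⟩ := hOCfacts u hu
    obtain ⟨hadj', _, hd1'⟩ := hOCfacts u' hu'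
    have hle : G.dist u u' ≤ 2 := by
      have := SimpleGraph.dist_le (Walk.cons hadj.symm (Walk.cons hadj' Walk.nil))
      simpa using this
    have hparity := dpar u u'
    rw [hd1, hd1'] at hparity
    have hne0 : G.dist u u' ≠ 0 := fun h0 => hne (hd00 u u' h0)
    omega
  have hduz : ∀ u ∈ OC, ∀ z ∈ GC, G.dist u z = 3 := by
    intro u hu z hz
    obtain ⟨hadj, hnec, hd1⟩ := hOCfacts u hu
    obtain ⟨hadjz, hner, hd2⟩ := hGCfacts z hz
    have hle : G.dist u z ≤ 3 := by
      have := SimpleGraph.dist_le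
        (Walk.cons hadj.symm (Walk.cons hc (Walk.cons hadjz Walk.nil)))
      simpa using this
    have hparity := dpar u z
    rw [hd1, hd2] at hparity
    have hne1 : G.dist u z ≠ 1 := by
      intro h1
      have hadjuz : G.Adj u z := SimpleGraph.dist_eq_one_iff_adj.mp h1
      have : u = c := parent_unique hT r hadjuz.symm hadjz.symm
        (by omega) (by omega)
      exact hnec this
    omega
  -- numeric constraint helpers
  have habs : ∀ {q a b : ℕ}, (q:ℤ) ≤ |(a:ℤ) - (b:ℤ)| → b + q ≤ a ∨ a + q ≤ b := by
    intro q a b hq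
    rcases abs_cases ((a:ℤ) - (b:ℤ)) with ⟨he, _⟩ | ⟨he, _⟩ <;> rw [he] at hq <;> omega
  have con2 : ∀ a b : V, G.dist a b = 2 ∨ G.dist a b = 3 →
      f a + p ≤ f b ∨ f b + p ≤ f a := by
    intro a b hd
    rcases habs (hf.2.2 a b hd) with h' | h'
    · exact Or.inr (by omega)
    · exact Or.inl (by omega)
  have con1 : ∀ a b : V, G.dist a b = 1 → f a + h ≤ f b ∨ f b + h ≤ f a := by
    intro a b hd
    rcases habs (hf.2.1 a b hd) with h' | h'
    · exact Or.inr (by omega)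
    · exact Or.inl (by omega)
  set U := OC ∪ GC with hU
  have hUcard : U.card = 2 * m := by
    rw [hU, Finset.card_union_of_disjoint hdisj, hOCcard, hGCcard]; ring
  have hUsep : ∀ v ∈ U, ∀ v' ∈ U, v ≠ v' → f v + p ≤ f v' ∨ f v' + p ≤ f v := by
    intro v hv v' hv' hne
    rw [hU, Finset.mem_union] at hv hv'
    rcases hv with hv | hv <;> rcases hv' with hv' | hv'
    · exact con2 v v' (Or.inl (hduu v hv v' hv' hne))
    · exact con2 v v' (Or.inr (hduz v hv v' hv'))
    · rcases con2 v' v (Or.inr (hduz v' hv' v hv)) with h' | h'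
      · exact Or.inr h'
      · exact Or.inl h'
    · exact con2 v v' (Or.inl (hdzz v hv v' hv' hne))
  have hUx : ∀ v ∈ U, f v + p ≤ f r ∨ f r + p ≤ f v := by
    intro v hv
    rw [hU, Finset.mem_union] at hv
    rcases hv with hv | hv
    · rcases con1 r v (hOCfacts v hv).2.2 with h' | h'
      · exact Or.inr (by omega)
      · exact Or.inl (by omega)
    · rcases con2 r v (Or.inl (hGCfacts v hv).2.2) with h' | h'
      · exact Or.inr h'
      · exact Or.inl h'
  have hUy : ∀ v ∈ U, f v + p ≤ f c ∨ f c + p ≤ f v := by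
    intro v hv
    rw [hU, Finset.mem_union] at hv
    rcases hv with hv | hv
    · rcases con2 c v (Or.inl (hdcu v hv)) with h' | h'
      · exact Or.inr h'
      · exact Or.inl h'
    · have hdcz : G.dist c v = 1 := SimpleGraph.dist_eq_one_iff_adj.mpr (hGCfacts v hv).1
      rcases con1 c v hdcz with h' | h'
      · exact Or.inr (by omega)
      · exact Or.inl (by omega)
  have hGCy : ∀ z ∈ GC, f z + h ≤ f c ∨ f c + h ≤ f z := by
    intro z hz
    have hdcz : G.dist c z = 1 := SimpleGraph.dist_eq_one_iff_adj.mpr (hGCfacts z hz).1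
    rcases con1 c z hdcz with h' | h'
    · exact Or.inr h'
    · exact Or.inl h'
  set x := f r with hx
  set y := f c with hy
  have hxy : x + h ≤ y := by
    rcases con1 r c hdrc with h' | h'
    · omega
    · omega
  have hOCmin : ∀ u ∈ OC, u ∈ U → (x + (y - x) ≤ f u ∨ f u + (y - x) ≤ x) := by
    intro u hu _
    have hadj := (hOCfacts u hu).1
    have := hmin u hadj
    have hc1 : ((y - x : ℕ) : ℤ) = (y:ℤ) - (x:ℤ) := by
      rw [Nat.cast_sub (by omega)]
    rcases habs (q := y - x) (a := f u) (b := x) (by rw [hc1]; exact this) with h' | h'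
    · exact Or.inl h'
    · exact Or.inr h'
  -- the label set
  set T := U.image f with hT'
  have hinj : Set.InjOn f U := by
    intro a ha b hb hab
    by_contra hne
    rcases hUsep a ha b hb hne with h' | h' <;> omega
  have hTcard : T.card = 2 * m := by
    rw [hT', Finset.card_image_of_injOn hinj, hUcard]
  have hTmem : ∀ s ∈ T, ∃ v ∈ U, f v = s := by
    intro s hs
    rw [hT', Finset.mem_image] at hs
    exact hs
  have hTsep : ∀ s ∈ T, ∀ t ∈ T, s ≠ t → s + p ≤ t ∨ t + p ≤ s := by
    intro s hs t ht hne
    obtain ⟨v, hv, rfl⟩ := hTmem s hs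
    obtain ⟨v', hv', rfl⟩ := hTmem t ht
    exact hUsep v hv v' hv' (fun he => hne (he ▸ rfl))
  have hTx : ∀ s ∈ T, s + p ≤ x ∨ x + p ≤ s := by
    intro s hs; obtain ⟨v, hv, rfl⟩ := hTmem s hs; exact hUx v hv
  have hTy : ∀ s ∈ T, s + p ≤ y ∨ y + p ≤ s := by
    intro s hs; obtain ⟨v, hv, rfl⟩ := hTmem s hs; exact hUy v hv
  have hTle : ∀ s ∈ T, s ≤ ℓ := by
    intro s hs; obtain ⟨v, _, rfl⟩ := hTmem s hs; exact hf.1 v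
  -- middles are grandchild labels
  have hTmid : ∀ s ∈ T, x < s → s < y → (x + p ≤ s ∧ s + h ≤ y) := by
    intro s hs hxs hsy
    obtain ⟨v, hv, rfl⟩ := hTmem s hs
    have hvmem := hv
    rw [hU, Finset.mem_union] at hvmem
    rcases hvmem with hvo | hvg
    · rcases hOCmin v hvo hv with h' | h' <;> omega
    · constructor
      · rcases hUx v hv with h' | h' <;> omega
      · rcases hGCy v hvg with h' | h' <;> omega
  -- partition
  set TA := T.filter (fun s => s < x) with hTA
  set TB := T.filter (fun s => x < s ∧ s < y) with hTB
  set TC := T.filter (fun s => y < s) with hTC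
  have htri : ∀ s ∈ T, s < x ∨ (x < s ∧ s < y) ∨ y < s := by
    intro s hs
    have h1 := hTx s hs
    have h2 := hTy s hs
    omega
  have hsub : T ⊆ TA ∪ TB ∪ TC := by
    intro s hs
    rcases htri s hs with h' | h' | h'
    · exact Finset.mem_union_left _ (Finset.mem_union_left _ (Finset.mem_filter.mpr ⟨hs, h'⟩))
    · exact Finset.mem_union_left _ (Finset.mem_union_right _ (Finset.mem_filter.mpr ⟨hs, h'⟩))
    · exact Finset.mem_union_right _ (Finset.mem_filter.mpr ⟨hs, h'⟩)
  have hcards : 2 * m ≤ TA.card + TB.card + TC.card := by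
    calc 2 * m = T.card := hTcard.symm
      _ ≤ (TA ∪ TB ∪ TC).card := Finset.card_le_card hsub
      _ ≤ (TA ∪ TB).card + TC.card := Finset.card_union_le _ _
      _ ≤ TA.card + TB.card + TC.card := by
          have := Finset.card_union_le TA TB
          omega
  have hexp : ∀ a : ℕ, 1 ≤ a → (a-1)*p + p = a*p := by
    intro a ha
    conv_rhs => rw [show a = (a-1)+1 by omega]
    rw [add_mul, one_mul]
  -- bound (1): TA.card * p ≤ x
  have hAx : TA.card * p ≤ x := by
    rcases TA.eq_empty_or_nonempty with he | hne
    · rw [he]; simp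
    · have hbd : ∀ s ∈ TA, 0 ≤ s ∧ s ≤ x - p := by
        intro s hs
        rw [hTA, Finset.mem_filter] at hs
        have := hTx s hs.1
        omega
      have hch := chain_lemma hp TA.card TA rfl hne
        (fun s hs t ht hst => hTsep s (Finset.mem_of_mem_filter s hs) t
          (Finset.mem_of_mem_filter t ht) hst) 0 (x - p) hbd
      obtain ⟨s₀, hs₀⟩ := hne
      have hpx : p ≤ x := by
        have := (hbd s₀ hs₀).2
        have h0 := hTx s₀ (Finset.mem_of_mem_filter s₀ hs₀)
        rw [hTA, Finset.mem_filter] at hs₀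
        omega
      have hcard1 : 1 ≤ TA.card := Finset.card_pos.mpr ⟨s₀, hs₀⟩
      have := hexp TA.card hcard1
      omega
  -- bound (2): y + TC.card * p ≤ ℓ
  have hCy : y + TC.card * p ≤ ℓ := by
    rcases TC.eq_empty_or_nonempty with he | hne
    · rw [he]; simpa using hf.1 c
    · have hbd : ∀ s ∈ TC, y + p ≤ s ∧ s ≤ ℓ := by
        intro s hs
        rw [hTC, Finset.mem_filter] at hs
        have := hTy s hs.1
        have := hTle s hs.1
        omega
      have hch := chain_lemma hp TC.card TC rfl hne
        (fun s hs t ht hst => hTsep s (Finset.mem_of_mem_filter s hs) t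
          (Finset.mem_of_mem_filter t ht) hst) (y + p) ℓ hbd
      have hcard1 : 1 ≤ TC.card := Finset.card_pos.mpr hne
      have := hexp TC.card hcard1
      omega
  -- bound (3): x + h + TB.card * p ≤ y
  have hBxy : x + h + TB.card * p ≤ y := by
    rcases TB.eq_empty_or_nonempty with he | hne
    · rw [he]; simpa using hxy
    · have hbd : ∀ s ∈ TB, x + p ≤ s ∧ s ≤ y - h := by
        intro s hs
        rw [hTB, Finset.mem_filter] at hs
        have := hTmid s hs.1 hs.2.1 hs.2.2
        omega
      have hch := chain_lemma hp TB.card TB rfl hne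
        (fun s hs t ht hst => hTsep s (Finset.mem_of_mem_filter s hs) t
          (Finset.mem_of_mem_filter t ht) hst) (x + p) (y - h) hbd
      have hcard1 : 1 ≤ TB.card := Finset.card_pos.mpr hne
      have := hexp TB.card hcard1
      omega
  -- combine
  have hmul : 2 * m * p ≤ (TA.card + TB.card + TC.card) * p := Nat.mul_le_mul_right p hcards
  have hdistrib : (TA.card + TB.card + TC.card) * p = TA.card * p + TB.card * p + TC.card * p := by
    ring
  omega


lemma lower [Fintype V] [DecidableRel G.Adj] (hT : G.IsTree) (r : V) {m k : ℕ}
    (hm : 2 ≤ m) (hk : 2 ≤ k)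
    (hdeg : ∀ v : V, G.dist r v < k → G.degree v = m + 1)
    (hball : ∀ v : V, G.dist r v ≤ k)
    {h p : ℕ} (hp : 1 ≤ p) (hph : p ≤ h) {ℓ : ℕ} {f : V → ℕ}
    (hf : IsLLabelling G h p ℓ f) : h + 2*m*p ≤ ℓ := by
  have hdegr : G.degree r = m + 1 := hdeg r (by rw [SimpleGraph.dist_self]; omega)
  have hNne : (G.neighborFinset r).Nonempty := by
    rw [← Finset.card_pos, card_neighborFinset_eq_degree, hdegr]; omega
  obtain ⟨c, hcmem, hcmin⟩ := Finset.exists_min_image (G.neighborFinset r)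
    (fun v => ((f v : ℤ) - (f r : ℤ)).natAbs) hNne
  have hc : G.Adj r c := (G.mem_neighborFinset r c).mp hcmem
  have hdrc : G.dist r c = 1 := SimpleGraph.dist_eq_one_iff_adj.mpr hc
  have hcon := hf.2.1 r c hdrc
  have hfrc : f r ≠ f c := by
    intro he
    rw [he, sub_self, abs_zero] at hcon
    omega
  rcases Nat.lt_or_ge (f r) (f c) with hlt | hge
  · refine lower_key hT r hm hk hdeg hball hp hph hf c hc hlt ?_
    intro v hv
    have hm1 := hcmin v ((G.mem_neighborFinset r v).mpr hv)
    calc ((f c:ℤ) - (f r:ℤ)) ≤ |(f c:ℤ) - (f r:ℤ)| := le_abs_self _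
      _ = (((f c:ℤ) - (f r:ℤ)).natAbs : ℤ) := Int.abs_eq_natAbs _
      _ ≤ (((f v:ℤ) - (f r:ℤ)).natAbs : ℤ) := by exact_mod_cast hm1
      _ = |(f v:ℤ) - (f r:ℤ)| := (Int.abs_eq_natAbs _).symm
  · have hlt' : f c < f r := by omega
    set g : V → ℕ := fun v => ℓ - f v with hg
    have hfle : ∀ v, f v ≤ ℓ := hf.1
    have hcast : ∀ v, (g v : ℤ) = (ℓ:ℤ) - (f v:ℤ) := by
      intro v
      show ((ℓ - f v : ℕ) : ℤ) = _
      rw [Nat.cast_sub (hfle v)]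
    have habs2 : ∀ u v : V, |(g u:ℤ) - (g v:ℤ)| = |(f u:ℤ) - (f v:ℤ)| := by
      intro u v
      rw [hcast u, hcast v,
        show (ℓ:ℤ) - f u - ((ℓ:ℤ) - f v) = -((f u:ℤ) - f v) by ring, abs_neg]
    have hgL : IsLLabelling G h p ℓ g := by
      refine ⟨fun v => by show ℓ - f v ≤ ℓ; omega, ?_, ?_⟩
      · intro u v hd; rw [habs2]; exact hf.2.1 u v hd
      · intro u v hd; rw [habs2]; exact hf.2.2 u v hd
    refine lower_key hT r hm hk hdeg hball hp hph hgL c hc ?_ ?_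
    · show ℓ - f r < ℓ - f c
      have := hfle r
      omega
    · intro v hv
      have hm1 := hcmin v ((G.mem_neighborFinset r v).mpr hv)
      have e1 : ((g c:ℤ) - (g r:ℤ)) = (((f c:ℤ) - (f r:ℤ)).natAbs : ℤ) := by
        rw [hcast c, hcast r, ← Int.abs_eq_natAbs, abs_sub_comm,
          abs_of_nonneg (by omega : (0:ℤ) ≤ (f r:ℤ) - (f c:ℤ))]
        ring
      calc ((g c:ℤ) - (g r:ℤ)) = (((f c:ℤ) - (f r:ℤ)).natAbs : ℤ) := e1
        _ ≤ (((f v:ℤ) - (f r:ℤ)).natAbs : ℤ) := by exact_mod_cast hm1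
        _ = |(f v:ℤ) - (f r:ℤ)| := (Int.abs_eq_natAbs _).symm
        _ = |(g v:ℤ) - (g r:ℤ)| := (habs2 v r).symm



end Stmt6Aux

theorem stmt6 {V : Type} [Fintype V] (G : SimpleGraph V) [DecidableRel G.Adj]
    (hT : G.IsTree) (m k : ℕ) (hm : 2 ≤ m) (hk : 2 ≤ k) (r : V)
    (hdeg : ∀ v : V, G.dist r v < k → G.degree v = m + 1)
    (hball : ∀ v : V, G.dist r v ≤ k)
    (h p : ℕ) (hp : 1 ≤ p) (hph : p ≤ h) :
    lambdaNum G h p = h + 2 * m * p ∧ lambdaStar G h p = h + 2 * m * p := by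
  haveI : DecidableEq V := Classical.decEq V
  obtain ⟨fstar, hfstar⟩ := Stmt6Aux.upper hT r hm hk hdeg hball h p hp hph
  have memStar : (h + 2*m*p) ∈ {ℓ : ℕ | ∃ f : V → ℕ, IsElegantLLabelling G h p ℓ f} :=
    ⟨fstar, hfstar⟩
  have memL : (h + 2*m*p) ∈ {ℓ : ℕ | ∃ f : V → ℕ, IsLLabelling G h p ℓ f} :=
    ⟨fstar, hfstar.1⟩
  constructor
  · refine le_antisymm (Nat.sInf_le memL) (le_csInf ⟨_, memL⟩ ?_)
    rintro ℓ' ⟨f, hf⟩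
    exact Stmt6Aux.lower hT r hm hk hdeg hball hp hph hf
  · refine le_antisymm (Nat.sInf_le memStar) (le_csInf ⟨_, memStar⟩ ?_)
    rintro ℓ' ⟨f, hf⟩
    exact Stmt6Aux.lower hT r hm hk hdeg hball hp hph hf.1
end
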